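/- arXiv:2405.13444 — 6 statements merged into one kernel-verified Lean document; each statement's English description precedes it below -/
import Mathlib

section
/- Let C and A be Polish abelian groups, let c : C × C → A be a continuous symmetric 2-cocycle, and let t : C → A be a function with δt = c. If t is Borel measurable, then t is continuous (and hence c is the coboundary of a continuous function). -/
/-!
By Pettis' theorem, if a Baire measurable set `S` in a Baire group is not meagre, then `S - S`
is a neighbourhood of `0`. Continuity of `δt` makes the defect `t (x - y) - (t x - t y)` a
continuous function of `(x, y)`, equal to `t 0` on the diagonal. Countably many Borel pieces,
on each of which `t` varies little and the defect stays close to `t 0`, cover the group (Lindelöf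
property on both sides); by Baire one piece is not meagre, and `t` is close to `t 0` on its
difference set, which is a neighbourhood of `0`. Continuity at `0` then spreads by translation,
again because the defect is continuous.
-/

open Filter Set Topology Pointwise

theorem Filter.EventuallyEq.isMeagre_iff {X : Type*} [TopologicalSpace X] {s t : Set X}
    (h : s =ᵇ t) : IsMeagre s ↔ IsMeagre t :=
  eventually_congr h.compl.mem_iff

theorem exists_countable_isOpen_cover_prod_self_subset {X : Type*} [TopologicalSpace X]
    [LindelofSpace X] {Z : Set (X × X)} (hZ : ∀ x, Z ∈ 𝓝 (x, x)) :
    ∃ s : Set (Set X), s.Countable ∧ (∀ x, ∃ u ∈ s, x ∈ u) ∧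
      ∀ u ∈ s, IsOpen u ∧ u ×ˢ u ⊆ Z := by
  have hsq : ∀ x, ∃ u ∈ 𝓝 x, u ×ˢ u ⊆ Z := fun x =>
    mem_prod_self_iff.1 (by rw [← nhds_prod_eq]; exact hZ x)
  choose u hu hu_sq using hsq
  obtain ⟨t, ht, ht_cover⟩ := countable_cover_nhds_interior hu
  refine ⟨(fun x => interior (u x)) '' t, ht.image _, fun x => ?_, ?_⟩
  · obtain ⟨y, hy, hxy⟩ := mem_iUnion₂.1 (ht_cover.symm ▸ mem_univ x)
    exact ⟨_, mem_image_of_mem _ hy, hxy⟩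
  · rintro _ ⟨y, -, rfl⟩
    exact ⟨isOpen_interior, (Set.prod_mono interior_subset interior_subset).trans (hu_sq y)⟩

section Pettis

variable {G : Type*} [AddCommGroup G] [TopologicalSpace G] [IsTopologicalAddGroup G]
  [BaireSpace G]

theorem BaireMeasurableSet.sub_self_mem_nhds_zero {S : Set G} (hS : BaireMeasurableSet S)
    (hS_meagre : ¬IsMeagre S) : S - S ∈ 𝓝 0 := by
  obtain ⟨U, hU, hSU⟩ := hS.residualEq_isOpen
  obtain ⟨u, hu⟩ := nonempty_of_not_isMeagre (hSU.isMeagre_iff.not.1 hS_meagre)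
  refine mem_of_superset (hU.sub_right.mem_nhds ⟨u, hu, u, hu, sub_self u⟩) ?_
  rintro _ ⟨a, ha, b, hb, rfl⟩
  set τ : G → G := fun y => y - (a - b)
  have hτU : IsOpen (U ∩ τ ⁻¹' U) := hU.inter (hU.preimage (continuous_sub_right _))
  have hτS : (S ∩ τ ⁻¹' S : Set G) =ᵇ (U ∩ τ ⁻¹' U : Set G) :=
    hSU.inter (hSU.comp_tendsto (Homeomorph.subRight (a - b)).residual_map_eq.le)
  obtain ⟨y, hy, hτy⟩ := nonempty_of_not_isMeagre <| hτS.isMeagre_iff.not.2 <|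
    not_isMeagre_of_isOpen hτU ⟨a, ha, by simpa [τ] using hb⟩
  exact ⟨y, hy, τ y, hτy, sub_sub_cancel y _⟩

end Pettis

section AutomaticContinuity

variable {G H : Type*} [AddCommGroup G] [TopologicalSpace G] [IsTopologicalAddGroup G]
  [AddCommGroup H] [TopologicalSpace H] [IsTopologicalAddGroup H] {f : G → H}

theorem continuous_of_continuousAt_zero_of_continuous_sub_defect (hf : ContinuousAt f 0)
    (hψ : Continuous fun p : G × G => f (p.1 - p.2) - (f p.1 - f p.2)) : Continuous f := by
  refine continuous_iff_continuousAt.2 fun x₀ => ?_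
  have h_shift : Tendsto (fun x => f (x - x₀)) (𝓝 x₀) (𝓝 (f 0)) :=
    hf.tendsto.comp ((continuous_sub_right x₀).tendsto' x₀ 0 (sub_self x₀))
  have h_defect : Tendsto (fun x => f (x - x₀) - (f x - f x₀)) (𝓝 x₀) (𝓝 (f 0)) := by
    have h_slice : Continuous fun x : G => (x, x₀) := continuous_id.prodMk continuous_const
    simpa [Function.comp_def] using (hψ.comp h_slice).tendsto x₀
  simpa [ContinuousAt] using (h_shift.sub h_defect).add_const (f x₀)

theorem continuousAt_zero_of_measurable_of_continuous_sub_defect [BaireSpace G] [LindelofSpace G]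
    [MeasurableSpace G] [BorelSpace G] [LindelofSpace H] [MeasurableSpace H]
    [OpensMeasurableSpace H] (hf : Measurable f)
    (hψ : Continuous fun p : G × G => f (p.1 - p.2) - (f p.1 - f p.2)) : ContinuousAt f 0 := by
  intro V hV
  obtain ⟨V₁, hV₁, V₂, hV₂, hV₁₂⟩ :
      ∃ V₁ ∈ 𝓝 (0 : H), ∃ V₂ ∈ 𝓝 (f 0), V₁ + V₂ ⊆ V := by
    have : (fun q : H × H => q.1 + q.2) ⁻¹' V ∈ 𝓝 (0, f 0) :=
      continuous_add.continuousAt (by simpa using hV)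
    obtain ⟨V₁, hV₁, V₂, hV₂, h⟩ := mem_nhds_prod_iff.1 this
    refine ⟨V₁, hV₁, V₂, hV₂, ?_⟩
    rintro _ ⟨a, ha, b, hb, rfl⟩
    exact h (mk_mem_prod ha hb)
  obtain ⟨sH, hsH, hsH_cover, hsH_small⟩ :=
    exists_countable_isOpen_cover_prod_self_subset (Z := {q : H × H | q.1 - q.2 ∈ V₁})
      fun y => continuous_sub.continuousAt (by simpa using hV₁)
  obtain ⟨sG, hsG, hsG_cover, hsG_small⟩ :=
    exists_countable_isOpen_cover_prod_self_subset
      (Z := (fun p : G × G => f (p.1 - p.2) - (f p.1 - f p.2)) ⁻¹' V₂)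
      fun x => hψ.continuousAt (by simpa using hV₂)
  have h_cover : ⋃ q ∈ sH ×ˢ sG, f ⁻¹' q.1 ∩ q.2 = univ := by
    refine eq_univ_of_forall fun x => mem_iUnion₂.2 ?_
    obtain ⟨u, hu, hxu⟩ := hsH_cover (f x)
    obtain ⟨b, hb, hxb⟩ := hsG_cover x
    exact ⟨(u, b), ⟨hu, hb⟩, hxu, hxb⟩
  obtain ⟨⟨u, b⟩, ⟨hu, hb⟩, h_piece⟩ := exists_of_not_isMeagre_biUnion (hsH.prod hsG)
    (h_cover ▸ not_isMeagre_of_isOpen isOpen_univ univ_nonempty)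
  have h_meas : MeasurableSet (f ⁻¹' u ∩ b) :=
    (hf (hsH_small u hu).1.measurableSet).inter (hsG_small b hb).1.measurableSet
  refine mem_map.2 <| mem_of_superset (h_meas.baireMeasurableSet.sub_self_mem_nhds_zero h_piece) ?_
  rintro _ ⟨x, ⟨hxu, hxb⟩, y, ⟨hyu, hyb⟩, rfl⟩
  have h₁ : f x - f y ∈ V₁ := (hsH_small u hu).2 (mk_mem_prod hxu hyu)
  have h₂ : f (x - y) - (f x - f y) ∈ V₂ := (hsG_small b hb).2 (mk_mem_prod hxb hyb)
  simpa using hV₁₂ (add_mem_add h₁ h₂)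

theorem Measurable.continuous_of_continuous_sub_defect [BaireSpace G] [LindelofSpace G]
    [MeasurableSpace G] [BorelSpace G] [LindelofSpace H] [MeasurableSpace H]
    [OpensMeasurableSpace H] (hf : Measurable f)
    (hψ : Continuous fun p : G × G => f (p.1 - p.2) - (f p.1 - f p.2)) : Continuous f :=
  continuous_of_continuousAt_zero_of_continuous_sub_defect
    (continuousAt_zero_of_measurable_of_continuous_sub_defect hf hψ) hψ

theorem Measurable.continuous_of_continuous_coboundary [BaireSpace G] [LindelofSpace G]
    [MeasurableSpace G] [BorelSpace G] [LindelofSpace H] [MeasurableSpace H]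
    [OpensMeasurableSpace H] (hf : Measurable f)
    (hδ : Continuous fun p : G × G => f p.1 + f p.2 - f (p.1 + p.2)) : Continuous f := by
  refine hf.continuous_of_continuous_sub_defect ?_
  have h_sub_defect : ∀ x y, f (x - y) - (f x - f y) =
      (f y + f (-y) - f (y + -y)) - (f x + f (-y) - f (x + -y)) + f 0 := by
    intro x y
    rw [add_neg_cancel, ← sub_eq_add_neg]
    abel
  simp_rw [h_sub_defect]
  exact ((hδ.comp (continuous_snd.prodMk continuous_snd.neg)).sub
    (hδ.comp (continuous_fst.prodMk continuous_snd.neg))).add continuous_const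

end AutomaticContinuity

theorem borel_coboundary_is_continuous_general
    {C A : Type*} [AddCommGroup C] [TopologicalSpace C] [IsTopologicalAddGroup C] [PolishSpace C]
    [MeasurableSpace C] [BorelSpace C]
    [AddCommGroup A] [TopologicalSpace A] [IsTopologicalAddGroup A] [PolishSpace A]
    [MeasurableSpace A] [BorelSpace A]
    (c : C × C → A) (hc : Continuous c)
    (t : C → A) (ht : ∀ x y : C, c (x, y) = t x + t y - t (x + y))
    (htBorel : Measurable t) :
    Continuous t :=
  htBorel.continuous_of_continuous_coboundary (hc.congr fun p => ht p.1 p.2)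

/-- Let `C` and `A` be Polish abelian groups, let `c : C × C → A` be a
continuous symmetric 2-cocycle, and let `t : C → A` be a function with `δt = c` (where
`δt (x, y) = t x + t y - t (x + y)`). If `t` is Borel measurable, then `t` is continuous. -/
theorem borel_coboundary_is_continuous
    {C A : Type*} [AddCommGroup C] [TopologicalSpace C] [IsTopologicalAddGroup C] [PolishSpace C]
    [MeasurableSpace C] [BorelSpace C]
    [AddCommGroup A] [TopologicalSpace A] [IsTopologicalAddGroup A] [PolishSpace A]
    [MeasurableSpace A] [BorelSpace A]
    (c : C × C → A) (hc : Continuous c)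
    (hcocycle : ∀ x y z : C, c (x + y, z) + c (x, y) = c (x, y + z) + c (y, z))
    (hsymm : ∀ x y : C, c (x, y) = c (y, x))
    (hzero : ∀ x : C, c (0, x) = 0)
    (t : C → A) (ht : ∀ x y : C, c (x, y) = t x + t y - t (x + y))
    (htBorel : Measurable t) :
    Continuous t :=
  borel_coboundary_is_continuous_general c hc t ht htBorel
end

section
/- For every ε > 0, every countable abelian group A, and every bounded function c : A × A → ℝ satisfying the 2-cocycle identity c(x+y,z) + c(x,y) = c(x,y+z) + c(y,z) for all x,y,z ∈ A and with sup_{x,y} |c(x,y)| ≤ ε, there exists a bounded function t : A → ℝ with sup_x |t(x)| ≤ ε and δt = c. -/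
open Set BoundedContinuousFunction Pointwise

namespace BddCocycleAux

variable {A : Type*} [AddCommGroup A] [TopologicalSpace A] [DiscreteTopology A]

/-- The averaging function over a finite tuple of translates. -/
noncomputable def avg (f : A →ᵇ ℝ) {ι : Type} [Fintype ι] (a : ι → A) : A → ℝ :=
  fun x => (∑ i, f (x + a i)) / (Fintype.card ι : ℝ)

lemma avg_le_norm (f : A →ᵇ ℝ) {ι : Type} [Fintype ι] [Nonempty ι] (a : ι → A) (x : A) :
    avg f a x ≤ ‖f‖ := by
  have hcard : (0 : ℝ) < (Fintype.card ι : ℝ) := by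
    exact_mod_cast Fintype.card_pos
  rw [avg, div_le_iff₀ hcard]
  calc ∑ i, f (x + a i) ≤ ∑ _i : ι, ‖f‖ :=
        Finset.sum_le_sum fun i _ =>
          (Real.le_norm_self _).trans (f.norm_coe_le_norm _)
    _ = ‖f‖ * (Fintype.card ι : ℝ) := by
        rw [Finset.sum_const, Finset.card_univ, nsmul_eq_mul]; ring

lemma neg_norm_le_avg (f : A →ᵇ ℝ) {ι : Type} [Fintype ι] [Nonempty ι] (a : ι → A) (x : A) :
    -‖f‖ ≤ avg f a x := by
  have hcard : (0 : ℝ) < (Fintype.card ι : ℝ) := by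
    exact_mod_cast Fintype.card_pos
  rw [avg, le_div_iff₀ hcard]
  calc -‖f‖ * (Fintype.card ι : ℝ) = ∑ _i : ι, -‖f‖ := by
        rw [Finset.sum_const, Finset.card_univ, nsmul_eq_mul]; ring
    _ ≤ ∑ i, f (x + a i) := Finset.sum_le_sum fun i _ => by
        have := f.norm_coe_le_norm (x + a i)
        have := abs_le.1 ((Real.norm_eq_abs _ ▸ this))
        linarith [this.1]

lemma bddAbove_range_avg (f : A →ᵇ ℝ) {ι : Type} [Fintype ι] [Nonempty ι] (a : ι → A) :
    BddAbove (range (avg f a)) :=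
  ⟨‖f‖, by rintro r ⟨x, rfl⟩; exact avg_le_norm f a x⟩

/-- The set of sups of averages. -/
noncomputable def avgSet (f : A →ᵇ ℝ) : Set ℝ :=
  {r | ∃ (ι : Type) (_ : Fintype ι) (_ : Nonempty ι) (a : ι → A),
    r = sSup (range (avg f a))}

lemma avgSet_nonempty (f : A →ᵇ ℝ) : (avgSet f).Nonempty :=
  ⟨_, PUnit, inferInstance, inferInstance, fun _ => 0, rfl⟩

lemma neg_norm_le_of_mem {f : A →ᵇ ℝ} {r : ℝ} (hr : r ∈ avgSet f) : -‖f‖ ≤ r := by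
  obtain ⟨ι, _, _, a, rfl⟩ := hr
  exact le_trans (neg_norm_le_avg f a 0) (le_csSup (bddAbove_range_avg f a) ⟨0, rfl⟩)

lemma bddBelow_avgSet (f : A →ᵇ ℝ) : BddBelow (avgSet f) :=
  ⟨-‖f‖, fun _ hr => neg_norm_le_of_mem hr⟩

/-- The sublinear functional. -/
noncomputable def p (f : A →ᵇ ℝ) : ℝ := sInf (avgSet f)

lemma p_le_of_mem {f : A →ᵇ ℝ} {r : ℝ} (hr : r ∈ avgSet f) : p f ≤ r :=
  csInf_le (bddBelow_avgSet f) hr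

lemma p_le_of_forall_le {f : A →ᵇ ℝ} {r : ℝ} (h : ∀ z, f z ≤ r) : p f ≤ r := by
  refine le_trans (p_le_of_mem (f := f)
    ⟨PUnit, inferInstance, inferInstance, fun _ => 0, rfl⟩) ?_
  refine csSup_le (range_nonempty _) ?_
  rintro s ⟨x, rfl⟩
  simpa [avg] using h (x + 0)

lemma neg_norm_le_p (f : A →ᵇ ℝ) : -‖f‖ ≤ p f :=
  le_csInf (avgSet_nonempty f) fun _ hr => neg_norm_le_of_mem hr

lemma p_smul {c : ℝ} (hc : 0 < c) (f : A →ᵇ ℝ) : p (c • f) = c * p f := by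
  have hset : avgSet (c • f) = c • avgSet f := by
    ext r
    constructor
    · rintro ⟨ι, _, _, a, rfl⟩
      refine ⟨sSup (range (avg f a)), ⟨ι, ‹_›, ‹_›, a, rfl⟩, ?_⟩
      have : avg (c • f) a = fun x => c • avg f a x := by
        funext x
        simp only [avg, coe_smul, Pi.smul_apply, smul_eq_mul, ← Finset.mul_sum]
        ring
      rw [this, range_smul, Real.sSup_smul_of_nonneg hc.le]
    · rintro ⟨r', ⟨ι, _, _, a, rfl⟩, rfl⟩
      refine ⟨ι, ‹_›, ‹_›, a, ?_⟩
      have : avg (c • f) a = fun x => c • avg f a x := by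
        funext x
        simp only [avg, coe_smul, Pi.smul_apply, smul_eq_mul, ← Finset.mul_sum]
        ring
      rw [this, range_smul, Real.sSup_smul_of_nonneg hc.le]
  rw [p, hset, Real.sInf_smul_of_nonneg hc.le, smul_eq_mul, p]

lemma p_add_le (f g : A →ᵇ ℝ) : p (f + g) ≤ p f + p g := by
  have key : ∀ r₁ ∈ avgSet f, ∀ r₂ ∈ avgSet g, p (f + g) ≤ r₁ + r₂ := by
    rintro r₁ ⟨ι₁, _, _, a, rfl⟩ r₂ ⟨ι₂, _, _, b, rfl⟩
    set r₁ := sSup (range (avg f a)) with hr₁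
    set r₂ := sSup (range (avg g b)) with hr₂
    have hN₁ : (0 : ℝ) < (Fintype.card ι₁ : ℝ) := by exact_mod_cast Fintype.card_pos
    have hN₂ : (0 : ℝ) < (Fintype.card ι₂ : ℝ) := by exact_mod_cast Fintype.card_pos
    refine le_trans (p_le_of_mem (f := f + g)
      ⟨ι₁ × ι₂, inferInstance, inferInstance, fun q => a q.1 + b q.2, rfl⟩) ?_
    refine csSup_le (range_nonempty _) ?_
    rintro s ⟨x, rfl⟩
    have havgf : ∀ y : A, ∑ i, f (y + a i) ≤ r₁ * (Fintype.card ι₁ : ℝ) := by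
      intro y
      have : avg f a y ≤ r₁ := le_csSup (bddAbove_range_avg f a) ⟨y, rfl⟩
      rw [avg, div_le_iff₀ hN₁] at this
      linarith
    have havgg : ∀ y : A, ∑ j, g (y + b j) ≤ r₂ * (Fintype.card ι₂ : ℝ) := by
      intro y
      have : avg g b y ≤ r₂ := le_csSup (bddAbove_range_avg g b) ⟨y, rfl⟩
      rw [avg, div_le_iff₀ hN₂] at this
      linarith
    have hf' : ∑ q : ι₁ × ι₂, f (x + (a q.1 + b q.2))
        ≤ (Fintype.card ι₂ : ℝ) * (r₁ * (Fintype.card ι₁ : ℝ)) := by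
      rw [Fintype.sum_prod_type_right]
      calc ∑ j, ∑ i, f (x + (a i + b j))
          = ∑ j, ∑ i, f ((x + b j) + a i) := by
            refine Finset.sum_congr rfl fun j _ => Finset.sum_congr rfl fun i _ => ?_
            congr 1; abel
        _ ≤ ∑ _j : ι₂, r₁ * (Fintype.card ι₁ : ℝ) :=
            Finset.sum_le_sum fun j _ => havgf (x + b j)
        _ = (Fintype.card ι₂ : ℝ) * (r₁ * (Fintype.card ι₁ : ℝ)) := by
            rw [Finset.sum_const, Finset.card_univ, nsmul_eq_mul]
    have hg' : ∑ q : ι₁ × ι₂, g (x + (a q.1 + b q.2))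
        ≤ (Fintype.card ι₁ : ℝ) * (r₂ * (Fintype.card ι₂ : ℝ)) := by
      rw [Fintype.sum_prod_type]
      calc ∑ i, ∑ j, g (x + (a i + b j))
          = ∑ i, ∑ j, g ((x + a i) + b j) := by
            refine Finset.sum_congr rfl fun i _ => Finset.sum_congr rfl fun j _ => ?_
            congr 1; abel
        _ ≤ ∑ _i : ι₁, r₂ * (Fintype.card ι₂ : ℝ) :=
            Finset.sum_le_sum fun i _ => havgg (x + a i)
        _ = (Fintype.card ι₁ : ℝ) * (r₂ * (Fintype.card ι₂ : ℝ)) := by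
            rw [Finset.sum_const, Finset.card_univ, nsmul_eq_mul]
    rw [avg, div_le_iff₀ (by rw [Fintype.card_prod]; push_cast; positivity)]
    have hsum : ∑ q : ι₁ × ι₂, (f + g) (x + (a q.1 + b q.2))
        = (∑ q : ι₁ × ι₂, f (x + (a q.1 + b q.2)))
          + ∑ q : ι₁ × ι₂, g (x + (a q.1 + b q.2)) := by
      rw [← Finset.sum_add_distrib]
      refine Finset.sum_congr rfl fun q _ => ?_
      simp
    rw [hsum, Fintype.card_prod]
    push_cast
    nlinarith
  have h1 : ∀ r₁ ∈ avgSet f, p (f + g) - r₁ ≤ p g := fun r₁ h₁ =>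
    le_csInf (avgSet_nonempty g) fun r₂ h₂ => by linarith [key r₁ h₁ r₂ h₂]
  have h2 : p (f + g) - p g ≤ p f :=
    le_csInf (avgSet_nonempty f) fun r₁ h₁ => by linarith [h1 r₁ h₁]
  linarith

/-- The shift operator. -/
noncomputable def shift (y : A) (f : A →ᵇ ℝ) : A →ᵇ ℝ :=
  f.compContinuous ⟨fun z => z + y, continuous_of_discreteTopology⟩

@[simp] lemma shift_apply (y : A) (f : A →ᵇ ℝ) (z : A) : shift y f z = f (z + y) := rfl

lemma p_shift_sub_le (f : A →ᵇ ℝ) (y : A) : p (shift y f - f) ≤ 0 := by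
  have key : ∀ n : ℕ, 0 < n → p (shift y f - f) ≤ 2 * ‖f‖ / n := by
    intro n hn
    have hn' : (0 : ℝ) < (n : ℝ) := by exact_mod_cast hn
    haveI : Nonempty (Fin n) := Fin.pos_iff_nonempty.1 hn
    refine le_trans (p_le_of_mem (f := shift y f - f)
      ⟨Fin n, inferInstance, inferInstance, fun i => (i : ℕ) • y, rfl⟩) ?_
    refine csSup_le (range_nonempty _) ?_
    rintro s ⟨x, rfl⟩
    have hterm : ∀ i : Fin n, (shift y f - f) (x + (i : ℕ) • y)
        = f (x + ((i : ℕ) + 1) • y) - f (x + (i : ℕ) • y) := by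
      intro i
      have : x + (i : ℕ) • y + y = x + ((i : ℕ) + 1) • y := by
        rw [succ_nsmul]; abel
      simp [this]
    have hsum : ∑ i : Fin n, (shift y f - f) (x + (i : ℕ) • y)
        = f (x + n • y) - f x := by
      calc ∑ i : Fin n, (shift y f - f) (x + (i : ℕ) • y)
          = ∑ i : Fin n, (f (x + ((i : ℕ) + 1) • y) - f (x + (i : ℕ) • y)) :=
            Finset.sum_congr rfl fun i _ => hterm i
        _ = ∑ i ∈ Finset.range n, (f (x + (i + 1) • y) - f (x + i • y)) :=
            Fin.sum_univ_eq_sum_range (fun i => f (x + (i + 1) • y) - f (x + i • y)) n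
        _ = f (x + n • y) - f (x + 0 • y) := Finset.sum_range_sub (fun i => f (x + i • y)) n
        _ = f (x + n • y) - f x := by rw [zero_smul, add_zero]
    rw [avg, Fintype.card_fin, hsum, div_le_div_iff₀ hn' hn']
    have h1 := abs_le.1 (Real.norm_eq_abs _ ▸ f.norm_coe_le_norm (x + n • y))
    have h2 := abs_le.1 (Real.norm_eq_abs _ ▸ f.norm_coe_le_norm x)
    nlinarith [h1.1, h1.2, h2.1, h2.2]
  by_contra h
  push_neg at h
  obtain ⟨n, hn⟩ := exists_nat_gt (max 0 (2 * ‖f‖ / p (shift y f - f)))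
  have hn0 : 0 < n := by exact_mod_cast (le_max_left (0:ℝ) _).trans_lt hn
  have hnn : (0 : ℝ) < n := by exact_mod_cast hn0
  have h2 : 2 * ‖f‖ / p (shift y f - f) < n := (le_max_right _ _).trans_lt hn
  rw [div_lt_iff₀ h] at h2
  have h3 := (le_div_iff₀ hnn).1 (key n hn0)
  nlinarith


lemma exists_mean (A : Type*) [AddCommGroup A] [TopologicalSpace A] [DiscreteTopology A] :
    ∃ m : (A →ᵇ ℝ) →ₗ[ℝ] ℝ, ∀ f, m f ≤ p f := by
  obtain ⟨g, -, hg⟩ := exists_extension_of_le_sublinear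
    (⟨⊥, 0⟩ : (A →ᵇ ℝ) →ₗ.[ℝ] ℝ) p
    (fun c hc x => p_smul hc x) p_add_le
    (fun x => by
      have hx : (x : A →ᵇ ℝ) = 0 := (Submodule.mem_bot ℝ).1 x.2
      have h0 : (0 : ℝ) ≤ p (x : A →ᵇ ℝ) := by
        rw [hx]
        simpa using neg_norm_le_p (0 : A →ᵇ ℝ)
      simpa using h0)
  exact ⟨g, hg⟩

end BddCocycleAux

open BddCocycleAux in
/-- For every `ε > 0`, every countable abelian group `A`, and every bounded
function `c : A × A → ℝ` satisfying the 2-cocycle identity and with `sup |c| ≤ ε`, there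
exists a bounded function `t : A → ℝ` with `sup |t| ≤ ε` and `δt = c`, where
`δt (x, y) = t x + t y - t (x + y)`. -/
theorem bounded_cocycle_is_small_coboundary
    (ε : ℝ) (hε : 0 < ε) (A : Type*) [AddCommGroup A] [Countable A]
    (c : A × A → ℝ)
    (hcocycle : ∀ x y z : A, c (x + y, z) + c (x, y) = c (x, y + z) + c (y, z))
    (hbdd : ∀ x y : A, |c (x, y)| ≤ ε) :
    ∃ t : A → ℝ, (∀ x : A, |t x| ≤ ε) ∧ ∀ x y : A, t x + t y - t (x + y) = c (x, y) := by
  classical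
  letI : TopologicalSpace A := ⊥
  haveI : DiscreteTopology A := ⟨rfl⟩
  obtain ⟨m, hm⟩ := exists_mean A
  have hinv : ∀ (f : A →ᵇ ℝ) (y : A), m (shift y f - f) = 0 := by
    intro f y
    have h1 : m (shift y f - f) ≤ 0 := (hm _).trans (p_shift_sub_le f y)
    have hs : f - shift y f = shift y (-f) - (-f) := by
      ext z
      simp [shift_apply]; ring
    have h2 : m (f - shift y f) ≤ 0 := by
      rw [hs]; exact (hm _).trans (p_shift_sub_le (-f) y)
    have h3 : m (f - shift y f) = - m (shift y f - f) := by
      rw [← map_neg]; congr 1; abel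
    linarith [h3 ▸ h2]
  have hone : m 1 = 1 := by
    have h1 : m 1 ≤ 1 := (hm 1).trans (p_le_of_forall_le (fun z => by simp))
    have h2 : m (-1) ≤ -1 := (hm _).trans (p_le_of_forall_le (fun z => by simp))
    have h3 : m (-1) = - m 1 := map_neg m 1
    linarith
  let F : A → (A →ᵇ ℝ) := fun x =>
    BoundedContinuousFunction.mkOfBound
      ⟨fun z => c (x, z), continuous_of_discreteTopology⟩ (2 * ε)
      (fun z w => by
        have hz := abs_le.1 (hbdd x z)
        have hw := abs_le.1 (hbdd x w)
        rw [Real.dist_eq, abs_le]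
        constructor <;> simp <;> linarith)
  have hF_apply : ∀ x z, F x z = c (x, z) := fun x z => rfl
  refine ⟨fun x => m (F x), ?_, ?_⟩
  · intro x
    rw [abs_le]
    constructor
    · have hneg : m (-(F x)) ≤ ε := (hm _).trans (p_le_of_forall_le (fun z => by
        have := (abs_le.1 (hbdd x z)).1
        simp only [BoundedContinuousFunction.coe_neg, Pi.neg_apply]
        rw [hF_apply]
        linarith))
      rw [map_neg] at hneg
      linarith
    · exact (hm _).trans (p_le_of_forall_le fun z => (abs_le.1 (hbdd x z)).2)
  · intro x y
    have hsplit : F x + F y - F (x + y)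
        = c (x, y) • (1 : A →ᵇ ℝ) + (F x - shift y (F x)) := by
      ext z
      have hc := hcocycle x y z
      simp only [BoundedContinuousFunction.coe_add, BoundedContinuousFunction.coe_sub,
        Pi.add_apply, Pi.sub_apply, BoundedContinuousFunction.coe_smul, smul_eq_mul,
        BoundedContinuousFunction.coe_one, Pi.one_apply, shift_apply, hF_apply]
      rw [add_comm z y]
      linarith
    have heq : m (F x) + m (F y) - m (F (x + y)) = m (F x + F y - F (x + y)) := by
      rw [map_sub, map_add]
    rw [heq, hsplit, map_add, map_smul, smul_eq_mul, hone]
    have h4 : m (F x - shift y (F x)) = - m (shift y (F x) - F x) := by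
      rw [← map_neg]; congr 1; abel
    rw [h4, hinv]
    ring
end

section
/- For every non-Archimedean Polish abelian group C there exists a continuous surjective group homomorphism (ℤ^(ω))^ω → C. -/
/-- `ℤ^(ω)`: the free abelian group `⨁_{n ∈ ℕ} ℤ`, equipped with the discrete topology. -/
def ZOmega : Type := ℕ →₀ ℤ

noncomputable instance : AddCommGroup ZOmega := inferInstanceAs (AddCommGroup (ℕ →₀ ℤ))
instance : Countable ZOmega := inferInstanceAs (Countable (ℕ →₀ ℤ))
instance : TopologicalSpace ZOmega := ⊥
instance : DiscreteTopology ZOmega := ⟨rfl⟩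
instance : IsTopologicalAddGroup ZOmega where
  continuous_add := continuous_of_discreteTopology
  continuous_neg := continuous_of_discreteTopology

/-!
Fix a decreasing basis `C = U₀ ⊇ U₁ ⊇ ⋯` of open subgroups of `C` and a dense sequence
`(d n k)ₖ` in each `Uₙ`. Sending the `k`-th basis vector of the `n`-th factor to `d n k` and
summing over `n` gives a continuous homomorphism `(ℤ^(ω))^ω → C`, as soon as `C` is complete
in its group uniformity; it is onto because every `c` is the sum of a greedy series
`∑ₙ d n (kₙ)` whose `n`-th remainder lies in `Uₙ`.

Completeness is where Polishness enters: `C` embeds into the Polish group `∏ₙ C ⧸ Uₙ` of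
countable discrete quotients, and its image, being Polish, is a Gδ subgroup (Alexandrov),
hence closed (Baire).
-/

open Filter Topology Set TopologicalSpace
open scoped ENNReal

section Alexandrov

open Metric

variable {X Y : Type*} [PseudoEMetricSpace X] [TopologicalSpace Y]

/-- The points at which the inverse of `f` has oscillation at most `ε`. -/
def lowOscillationSet (f : X → Y) (ε : ℝ≥0∞) : Set Y :=
  {y | ∃ V, IsOpen V ∧ y ∈ V ∧ ediam (f ⁻¹' V) ≤ ε}

theorem isOpen_lowOscillationSet (f : X → Y) (ε : ℝ≥0∞) : IsOpen (lowOscillationSet f ε) :=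
  isOpen_iff_forall_mem_open.mpr fun _ ⟨V, hV, hyV, hVε⟩ =>
    ⟨V, fun _ hz => ⟨V, hV, hz, hVε⟩, hV, hyV⟩

theorem Topology.IsInducing.range_subset_lowOscillationSet {f : X → Y} (hf : IsInducing f)
    {ε : ℝ≥0∞} (hε : 0 < ε) : range f ⊆ lowOscillationSet f ε := by
  rintro _ ⟨x, rfl⟩
  have hε2 : 0 < ε / 2 := ENNReal.half_pos hε.ne'
  obtain ⟨V, hV, hVx⟩ := hf.isOpen_iff.mp (isOpen_eball (x := x) (ε := ε / 2))
  refine ⟨V, hV, ?_, ?_⟩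
  · change x ∈ f ⁻¹' V
    rw [hVx]
    exact mem_eball_self hε2
  · rw [hVx]
    calc ediam (eball x (ε / 2)) ≤ 2 * (ε / 2) := ediam_eball_le
      _ = ε := ENNReal.mul_div_cancel two_ne_zero ENNReal.ofNat_ne_top

theorem closure_range_inter_lowOscillationSet_subset [CompleteSpace X] [T2Space Y] {f : X → Y}
    (hf : Continuous f) :
    closure (range f) ∩ ⋂ n : ℕ, lowOscillationSet f (n : ℝ≥0∞)⁻¹ ⊆ range f := by
  rintro y ⟨hy, hyW⟩
  set F := 𝓝 y ⊓ 𝓟 (range f)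
  have : F.NeBot := mem_closure_iff_clusterPt.mp hy
  have : (comap f F).NeBot := NeBot.comap_of_range_mem ‹_› (mem_inf_of_right (mem_principal_self _))
  -- the oscillation bound at `y` makes the trace of `𝓝 y` on `range f` pull back to a Cauchy filter
  have hcauchy : Cauchy (comap f F) := by
    refine EMetric.cauchy_iff.mpr ⟨NeBot.ne ‹_›, fun ε hε => ?_⟩
    obtain ⟨n, hn⟩ := ENNReal.exists_inv_nat_lt hε.ne'
    obtain ⟨V, hV, hyV, hVn⟩ := mem_iInter.mp hyW n
    exact ⟨f ⁻¹' V, preimage_mem_comap (mem_inf_of_left (hV.mem_nhds hyV)),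
      fun a ha b hb => (edist_le_ediam_of_mem ha hb).trans_lt (hVn.trans_lt hn)⟩
  obtain ⟨x, hx⟩ := CompleteSpace.complete hcauchy
  exact ⟨x, tendsto_nhds_unique ((hf.tendsto x).mono_left hx)
    (map_comap_le.trans inf_le_left)⟩

theorem Topology.IsInducing.isGδ_range {X Y : Type*} [TopologicalSpace X]
    [IsCompletelyMetrizableSpace X] [TopologicalSpace Y] [MetrizableSpace Y] {f : X → Y}
    (hf : IsInducing f) : IsGδ (range f) := by
  let := upgradeIsCompletelyMetrizable X
  let := metrizableSpaceMetric Y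
  have hrange : range f = closure (range f) ∩ ⋂ n : ℕ, lowOscillationSet f (n : ℝ≥0∞)⁻¹ :=
    (closure_range_inter_lowOscillationSet_subset hf.continuous).antisymm' <|
      subset_inter subset_closure <| subset_iInter fun n =>
        hf.range_subset_lowOscillationSet (ENNReal.inv_pos.mpr (ENNReal.natCast_ne_top n))
  rw [hrange]
  exact isClosed_closure.isGδ.inter <| .iInter fun n => (isOpen_lowOscillationSet f _).isGδ

end Alexandrov

@[to_additive]
theorem Subgroup.eq_top_of_isGδ_of_dense {G : Type*} [Group G] [TopologicalSpace G]
    [IsTopologicalGroup G] [BaireSpace G] {H : Subgroup G} (hGδ : IsGδ (H : Set G))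
    (hH : Dense (H : Set G)) : H = ⊤ := by
  refine eq_top_iff.mpr fun y _ => ?_
  -- `H` and its preimage under `z ↦ y * z⁻¹` are dense Gδ sets, so they meet (Baire)
  let φ : G ≃ₜ G := (Homeomorph.inv G).trans (Homeomorph.mulLeft y)
  obtain ⟨z, hzH, hφz⟩ := (hH.inter_of_Gδ hGδ (hGδ.preimage φ.continuous)
    (hH.preimage φ.isOpenMap)).nonempty
  simpa [φ] using H.mul_mem hφz hzH

@[to_additive]
theorem Subgroup.isClosed_of_isGδ {G : Type*} [Group G] [TopologicalSpace G]
    [IsTopologicalGroup G] [IsCompletelyPseudoMetrizableSpace G] {H : Subgroup G}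
    (hGδ : IsGδ (H : Set G)) : IsClosed (H : Set G) := by
  have hdense : Dense (H.subgroupOf H.topologicalClosure : Set H.topologicalClosure) := by
    refine IsInducing.subtypeVal.dense_iff.mpr fun x => _root_.closure_mono ?_ x.2
    intro h hh
    exact ⟨⟨h, H.le_topologicalClosure hh⟩, hh, rfl⟩
  have := H.isClosed_topologicalClosure.isCompletelyPseudoMetrizableSpace
  have htop := Subgroup.eq_top_of_isGδ_of_dense
    (hGδ.preimage (f := ((↑) : H.topologicalClosure → G)) continuous_subtype_val) hdense
  rw [Subgroup.subgroupOf_eq_top] at htop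
  rw [← htop.antisymm H.le_topologicalClosure]
  exact H.isClosed_topologicalClosure

@[to_additive]
theorem MonoidHom.isClosed_range_of_isInducing {G L : Type*} [Group G] [TopologicalSpace G]
    [IsCompletelyMetrizableSpace G] [Group L] [TopologicalSpace L] [IsTopologicalGroup L]
    [IsCompletelyMetrizableSpace L] (f : G →* L) (hf : IsInducing f) :
    IsClosed (f.range : Set L) :=
  Subgroup.isClosed_of_isGδ (by simpa using hf.isGδ_range)

@[to_additive]
theorem IsUniformGroup.discreteUniformity (G : Type*) [Group G] [UniformSpace G] [IsUniformGroup G]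
    [DiscreteTopology G] : DiscreteUniformity G := by
  rw [discreteUniformity_iff_setRelId_mem_uniformity, uniformity_eq_comap_nhds_one, nhds_discrete]
  exact ⟨{1}, rfl, fun p hp => (div_eq_one.mp hp).symm⟩

@[to_additive]
theorem NonarchimedeanGroup.hasBasis_nhds_one (G : Type*) [Group G] [TopologicalSpace G]
    [NonarchimedeanGroup G] :
    (𝓝 (1 : G)).HasBasis (fun _ : OpenSubgroup G => True) fun U => (U : Set G) :=
  ⟨fun s => ⟨fun hs => (NonarchimedeanGroup.is_nonarchimedean s hs).imp fun _ hU => ⟨trivial, hU⟩,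
    fun ⟨U, _, hU⟩ => mem_of_superset U.mem_nhds_one hU⟩⟩

@[to_additive]
theorem NonarchimedeanGroup.exists_antitone_basis (G : Type*) [Group G] [TopologicalSpace G]
    [NonarchimedeanGroup G] [FirstCountableTopology G] :
    ∃ u : ℕ → OpenSubgroup G, u 0 = ⊤ ∧ (𝓝 (1 : G)).HasAntitoneBasis fun n => (u n : Set G) := by
  obtain ⟨v, -, hv⟩ := (hasBasis_nhds_one G).exists_antitone_subbasis
  refine ⟨fun n => n.casesOn ⊤ v, rfl, ⟨⟨fun s => ⟨fun hs => ?_, fun ⟨n, _, hn⟩ => ?_⟩⟩, ?_⟩⟩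
  · obtain ⟨n, hn⟩ := hv.mem_iff.mp hs
    exact ⟨n + 1, trivial, hn⟩
  · exact mem_of_superset (OpenSubgroup.mem_nhds_one _) hn
  · refine antitone_nat_of_succ_le fun n => ?_
    cases n
    · exact subset_univ _
    · exact hv.antitone (Nat.le_succ _)

theorem isInducing_pi_quotient {G ι : Type*} [AddCommGroup G] [TopologicalSpace G]
    [IsTopologicalAddGroup G] {u : ι → OpenAddSubgroup G}
    (hu : (𝓝 (0 : G)).HasBasis (fun _ => True) fun i => (u i : Set G)) :
    IsInducing (AddMonoidHom.pi fun i => QuotientAddGroup.mk' (u i).toAddSubgroup) := by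
  rw [IsTopologicalAddGroup.isInducing_iff_nhds_zero, hu.eq_iInf, nhds_pi, Filter.pi, comap_iInf]
  refine iInf_congr fun i => ?_
  rw [comap_comap, nhds_discrete, comap_pure]
  congr 1
  ext x
  simp

theorem NonarchimedeanAddGroup.completeSpace (G : Type*) [AddCommGroup G] [UniformSpace G]
    [IsUniformAddGroup G] [PolishSpace G] [NonarchimedeanAddGroup G] : CompleteSpace G := by
  obtain ⟨u, -, hu⟩ := exists_antitone_basis G
  let _ (n : ℕ) : UniformSpace (G ⧸ (u n).toAddSubgroup) :=
    IsTopologicalAddGroup.rightUniformSpace _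
  have (n : ℕ) := isUniformAddGroup_of_addCommGroup (G := G ⧸ (u n).toAddSubgroup)
  have (n : ℕ) := IsUniformAddGroup.discreteUniformity (G ⧸ (u n).toAddSubgroup)
  have (n : ℕ) : Countable (G ⧸ (u n).toAddSubgroup) :=
    separableSpace_iff_countable.mp (QuotientAddGroup.isQuotientMap_mk _).separableSpace
  let j : G →+ ∀ n, G ⧸ (u n).toAddSubgroup :=
    AddMonoidHom.pi fun n => QuotientAddGroup.mk' (u n).toAddSubgroup
  have hj : IsInducing j := isInducing_pi_quotient hu.toHasBasis
  exact (AddMonoidHom.isUniformInducing_of_isInducing hj).completeSpace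
    (by simpa using (j.isClosed_range_of_isInducing hj).isComplete)

namespace ZOmega

variable {G : Type*} [AddCommGroup G]

noncomputable def lift (v : ℕ → G) : ZOmega →+ G :=
  Finsupp.liftAddHom fun k => zmultiplesHom G (v k)

noncomputable def single (k : ℕ) : ZOmega := Finsupp.single k 1

@[simp]
theorem lift_single (v : ℕ → G) (k : ℕ) : lift v (single k) = v k :=
  (Finsupp.liftAddHom_apply_single _ k 1).trans (one_zsmul (v k))

theorem lift_mem {S : AddSubgroup G} {v : ℕ → G} (hv : ∀ k, v k ∈ S) (x : ZOmega) :
    lift v x ∈ S :=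
  AddSubgroup.sum_mem _ fun k _ => S.zsmul_mem (hv k) _

end ZOmega

theorem exists_continuous_addMonoidHom_hasSum {G D : Type*} [AddCommGroup G] [UniformSpace G]
    [IsUniformAddGroup G] [CompleteSpace G] [T2Space G] [NonarchimedeanAddGroup G]
    [AddCommGroup D] [TopologicalSpace D] [IsTopologicalAddGroup D] {u : ℕ → OpenAddSubgroup G}
    (hu : (𝓝 (0 : G)).HasAntitoneBasis fun n => (u n : Set G)) (g : ℕ → D →+ G)
    (hg_cont : ∀ n, Continuous (g n)) (hg : ∀ n x, g n x ∈ u n) :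
    ∃ F : (ℕ → D) →+ G, Continuous F ∧ ∀ x, HasSum (fun n => g n (x n)) (F x) := by
  have hsum (x : ℕ → D) : Summable fun n => g n (x n) :=
    NonarchimedeanAddGroup.summable_of_tendsto_cofinite_zero <| by
      rw [Nat.cofinite_eq_atTop]
      exact hu.tendsto fun n => hg n (x n)
  let F : (ℕ → D) →+ G :=
    { toFun x := ∑' n, g n (x n)
      map_zero' := by simp
      map_add' x y := by simpa only [Pi.add_apply, map_add] using (hsum x).tsum_add (hsum y) }
  have htail (x : ℕ → D) (n : ℕ) : F x - ∑ i ∈ Finset.range n, g i (x i) ∈ u n := by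
    change ∑' i, g i (x i) - _ ∈ _
    rw [← (hsum x).sum_add_tsum_nat_add n, add_sub_cancel_left]
    exact tsum_mem (u n).isClosed fun i => hu.antitone (Nat.le_add_left n i) (hg _ _)
  refine ⟨F, continuous_of_continuousAt_zero F ?_, fun x => (hsum x).hasSum⟩
  rw [ContinuousAt, map_zero, hu.tendsto_right_iff]
  intro n _
  have hopen : IsOpen {x : ℕ → D | ∑ i ∈ Finset.range n, g i (x i) ∈ u n} :=
    (u n).isOpen.preimage <| continuous_finsetSum _ fun i _ => (hg_cont i).comp (continuous_apply i)
  filter_upwards [hopen.mem_nhds (by simp)] with x hx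
  simpa using (u n).add_mem (htail x n) hx

theorem exists_tendsto_sum_range_of_subset_closure {G : Type*} [AddCommGroup G]
    [TopologicalSpace G] [IsTopologicalAddGroup G] {u : ℕ → OpenAddSubgroup G}
    (hu : (𝓝 (0 : G)).HasAntitoneBasis fun n => (u n : Set G)) {d : ℕ → ℕ → G}
    (hd : ∀ n, (u n : Set G) ⊆ closure (range (d n))) {c : G} (hc : c ∈ u 0) :
    ∃ k : ℕ → ℕ, Tendsto (fun N => ∑ n ∈ Finset.range N, d n (k n)) atTop (𝓝 c) := by
  have hstep (n : ℕ) (r : u n) : ∃ k, (r : G) - d n k ∈ u (n + 1) := by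
    have hopen : IsOpen {y | (r : G) - y ∈ u (n + 1)} :=
      (u (n + 1)).isOpen.preimage (continuous_const.sub continuous_id)
    obtain ⟨_, hk, k, rfl⟩ := mem_closure_iff.mp (hd n r.2) _ hopen (by simp)
    exact ⟨k, hk⟩
  choose K hK using hstep
  -- the remainders `r n = c - ∑ i < n, d i (K i (r i))` of the greedy expansion of `c`
  let r : ∀ n, u n := fun n => Nat.rec ⟨c, hc⟩ (fun n rn => ⟨rn - d n (K n rn), hK n rn⟩) n
  have hr (n : ℕ) : (r (n + 1)).1 = (r n).1 - d n (K n (r n)) := rfl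
  refine ⟨fun n => K n (r n), ?_⟩
  have hpartial (N : ℕ) : ∑ n ∈ Finset.range N, d n (K n (r n)) = c - (r N).1 := by
    induction N with
    | zero => simp [r]
    | succ N ih => rw [Finset.sum_range_succ, ih, hr]; abel
  simp only [hpartial]
  simpa using tendsto_const_nhds.sub (hu.tendsto fun n => SetLike.mem_coe.mpr (r n).2)

theorem exists_continuous_surjective_from_product_free_onto_nonarchimedean_general
    (C : Type) [AddCommGroup C] [TopologicalSpace C] [PolishSpace C]
    [NonarchimedeanAddGroup C] :
    ∃ f : (ℕ → ZOmega) →+ C, Continuous f ∧ Function.Surjective f := by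
  let _ := IsTopologicalAddGroup.rightUniformSpace C
  have := isUniformAddGroup_of_addCommGroup (G := C)
  have := NonarchimedeanAddGroup.completeSpace C
  obtain ⟨u, hu0, hu⟩ := NonarchimedeanAddGroup.exists_antitone_basis C
  let d (n : ℕ) : ℕ → C := fun k => denseSeq (u n : Set C) k
  have hd (n : ℕ) : (u n : Set C) ⊆ closure (range (d n)) := fun c hc => by
    have := continuous_subtype_val.range_subset_closure_image_dense
      (denseRange_denseSeq (u n : Set C)) ⟨⟨c, hc⟩, rfl⟩
    rwa [← range_comp] at this
  obtain ⟨F, hF, hFsum⟩ := exists_continuous_addMonoidHom_hasSum hu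
    (fun n => ZOmega.lift (d n)) (fun _ => continuous_of_discreteTopology)
    fun n => ZOmega.lift_mem fun k => (denseSeq (u n : Set C) k).2
  refine ⟨F, hF, fun c => ?_⟩
  obtain ⟨k, hk⟩ := exists_tendsto_sum_range_of_subset_closure hu hd (by simp [hu0])
  refine ⟨fun n => ZOmega.single (k n), tendsto_nhds_unique (hFsum _).tendsto_sum_nat ?_⟩
  simpa only [ZOmega.lift_single] using hk

/-- For every non-Archimedean Polish abelian group `C` there exists a
continuous surjective group homomorphism `(ℤ^(ω))^ω → C`. -/
theorem exists_continuous_surjective_from_product_free_onto_nonarchimedean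
    (C : Type) [AddCommGroup C] [TopologicalSpace C] [IsTopologicalAddGroup C] [PolishSpace C]
    [NonarchimedeanAddGroup C] :
    ∃ f : (ℕ → ZOmega) →+ C, Continuous f ∧ Function.Surjective f :=
  exists_continuous_surjective_from_product_free_onto_nonarchimedean_general C
end

section
/- Every closed subgroup G of (ℤ^(ω))^ω is topologically isomorphic to ℤ^α × (ℤ^(ω))^β for some α, β ≤ ω. -/
/-!
Let `G_n ≤ G` consist of the elements vanishing in all coordinates below `n`, and let
`H_n ≤ ℤ^(ω)` be the image of `G_n` under the `n`-th coordinate. Every subgroup of `ℤ^(ω)` is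
free (a basis can be read off from an echelon form), so the surjection `G_n → H_n` has a
section `s_n`. A family `(h_n) ∈ ∏ H_n` gives the series `∑ s_n(h_n)`, which converges
coordinatewise because its `n`-th term vanishes below `n`, and lies in `G` because `G` is closed.
Conversely the digits `h_n` of `g ∈ G` are peeled off one coordinate at a time. Hence
`G ≅ ∏_n H_n` as topological groups, and each `H_n` is `ℤ^k` with `k` finite or `ℤ^(ω)`.
-/

open Finset in
theorem Finsupp.linearIndependent_of_supported_Iic {R σ ι : Type*} [CommRing R] [IsDomain R]
    [LinearOrder σ] {p : ι → σ} (hp : Function.Injective p) {v : ι → σ →₀ R}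
    (hsupp : ∀ i, v i ∈ Finsupp.supported R R (Set.Iic (p i))) (hlead : ∀ i, v i (p i) ≠ 0) :
    LinearIndependent R v := by
  classical
  rw [linearIndependent_iff']
  intro s c hc i hi
  by_contra hci
  obtain ⟨j, hj, hmax⟩ := (s.filter (c · ≠ 0)).exists_max_image p ⟨i, mem_filter.2 ⟨hi, hci⟩⟩
  rw [mem_filter] at hj
  have hvanish : ∀ k ∈ s, k ≠ j → (c k • v k) (p j) = 0 := fun k hk hkj => by
    by_cases hck : c k = 0
    · simp [hck]
    have hlt : p k < p j := (hmax k (mem_filter.2 ⟨hk, hck⟩)).lt_of_ne (hp.ne hkj)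
    simp [Finsupp.notMem_support_iff.1 fun h => hlt.not_ge (hsupp k h)]
  have hcoeff := congrArg (· (p j)) hc
  simp only [Finsupp.finsetSum_apply, Finsupp.coe_zero, Pi.zero_apply] at hcoeff
  rw [Finset.sum_eq_single j hvanish (absurd hj.1), Finsupp.smul_apply, smul_eq_mul] at hcoeff
  exact (mul_eq_zero.1 hcoeff).elim hj.2 (hlead j)

namespace Submodule

open Finsupp

variable {R : Type*} [CommRing R] [IsPrincipalIdealRing R] (N : Submodule R (ℕ →₀ R))

noncomputable def leadingIdeal (m : ℕ) : Ideal R :=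
  (N ⊓ supported R R (Set.Iic m)).map (lapply m)

theorem exists_mem_supported_Iic_apply_eq_generator (m : ℕ) :
    ∃ v ∈ N, v ∈ supported R R (Set.Iic m) ∧ v m = IsPrincipal.generator (N.leadingIdeal m) := by
  obtain ⟨v, hv, hvm⟩ := mem_map.1 (IsPrincipal.generator_mem (N.leadingIdeal m))
  exact ⟨v, (mem_inf.1 hv).1, (mem_inf.1 hv).2, hvm⟩

theorem free_finsupp_nat [IsDomain R] : Module.Free R N := by
  classical
  let J := {m | N.leadingIdeal m ≠ ⊥}
  choose v hvN hvsupp hvlead using fun m : J => N.exists_mem_supported_Iic_apply_eq_generator m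
  have hli : LinearIndependent R v :=
    linearIndependent_of_supported_Iic Subtype.val_injective hvsupp fun m => by
      rw [hvlead]
      exact mt (IsPrincipal.eq_bot_iff_generator_eq_zero _).2 m.2
  suffices hspan : span R (Set.range v) = N by
    have := Module.Free.of_basis (Module.Basis.span hli)
    exact Module.Free.of_equiv (LinearEquiv.ofEq _ _ hspan)
  refine le_antisymm (span_le.2 (Set.range_subset_iff.2 hvN)) fun x hx => ?_
  obtain ⟨n, hn⟩ := x.support.exists_nat_subset_range
  replace hn : x ∈ supported R R (Set.Iio n) := fun k hk => by simpa using hn hk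
  induction n generalizing x with
  | zero => simp_all [supported_empty]
  | succ n ih =>
    have hxIic : x ∈ supported R R (Set.Iic n) := fun k hk => Nat.lt_succ_iff.1 (hn hk)
    have hy : ∃ y ∈ span R (Set.range v), y ∈ N ∧ y ∈ supported R R (Set.Iic n) ∧ y n = x n := by
      obtain ⟨a, ha⟩ := (IsPrincipal.mem_iff_eq_smul_generator (N.leadingIdeal n)).1
        (mem_map_of_mem (f := lapply n) (mem_inf.2 ⟨hx, hxIic⟩))
      by_cases hJ : n ∈ J
      · refine ⟨a • v ⟨n, hJ⟩, smul_mem _ _ (subset_span ⟨_, rfl⟩), N.smul_mem _ (hvN _),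
          smul_mem _ _ (hvsupp _), ?_⟩
        simpa [hvlead] using ha.symm
      · refine ⟨0, zero_mem _, zero_mem _, zero_mem _, ?_⟩
        simp_all [J, IsPrincipal.eq_bot_iff_generator_eq_zero]
    obtain ⟨y, hyspan, hyN, hysupp, hyn⟩ := hy
    have hxy : x - y ∈ supported R R (Set.Iio n) := fun k hk => by
      have hk' : k ≤ n := (sub_mem hxIic hysupp) hk
      refine hk'.lt_of_ne ?_
      rintro rfl
      simp [hyn] at hk
    simpa using add_mem (ih (x - y) (sub_mem hx hyN) hxy) hyspan

end Submodule

namespace AddSubgroup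

open Finset

variable {A : Type*} [AddCommGroup A] (G : AddSubgroup (ℕ → A))

def vanishingBelow (n : ℕ) : AddSubgroup (ℕ → A) where
  carrier := {x | x ∈ G ∧ ∀ m < n, x m = 0}
  add_mem' := fun ⟨hx, hx'⟩ ⟨hy, hy'⟩ =>
    ⟨G.add_mem hx hy, fun m hm => by simp [hx' m hm, hy' m hm]⟩
  zero_mem' := ⟨G.zero_mem, fun _ _ => rfl⟩
  neg_mem' := fun ⟨hx, hx'⟩ => ⟨G.neg_mem hx, fun m hm => by simp [hx' m hm]⟩

def layer (n : ℕ) : AddSubgroup A :=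
  (G.vanishingBelow n).map (Pi.evalAddMonoidHom (fun _ => A) n)

def layerProj (n : ℕ) : G.vanishingBelow n →+ G.layer n :=
  (Pi.evalAddMonoidHom (fun _ => A) n).addSubgroupMap _

@[simp]
theorem coe_layerProj {n : ℕ} (x : G.vanishingBelow n) : (G.layerProj n x : A) = (x : ℕ → A) n :=
  rfl

theorem layerProj_surjective (n : ℕ) : Function.Surjective (G.layerProj n) :=
  AddMonoidHom.addSubgroupMap_surjective _ _

structure LayerSplitting where
  lift : ∀ n, G.layer n →+ G.vanishingBelow n
  lift_apply_self : ∀ n x, (lift n x : ℕ → A) n = x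

theorem LayerSplitting.nonempty_of_projective [∀ n, Module.Projective ℤ (G.layer n)] :
    Nonempty G.LayerSplitting := by
  have hsplit : ∀ n, ∃ s : G.layer n →ₗ[ℤ] G.vanishingBelow n,
      (G.layerProj n).toIntLinearMap ∘ₗ s = LinearMap.id := fun n =>
    Module.projective_lifting_property _ _ (G.layerProj_surjective n)
  choose s hs using hsplit
  exact ⟨⟨fun n => (s n).toAddMonoidHom,
    fun n x => congrArg Subtype.val (LinearMap.congr_fun (hs n) x)⟩⟩

namespace LayerSplitting

variable {G} (σ : G.LayerSplitting)

def peel (n : ℕ) : G.vanishingBelow n →+ G.vanishingBelow (n + 1) :=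
  ((G.vanishingBelow n).subtype - (G.vanishingBelow n).subtype.comp
    ((σ.lift n).comp (G.layerProj n))).codRestrict _ fun x => by
      refine ⟨G.sub_mem x.2.1 (σ.lift n _).2.1, fun m hm => ?_⟩
      rcases Nat.lt_succ_iff_lt_or_eq.1 hm with hm | rfl
      · simp [x.2.2 m hm, (σ.lift n _).2.2 m hm]
      · simp [σ.lift_apply_self]

def residual : (n : ℕ) → G →+ G.vanishingBelow n
  | 0 => AddSubgroup.inclusion fun _ hx => ⟨hx, fun _ h => absurd h (Nat.not_lt_zero _)⟩
  | n + 1 => (σ.peel n).comp (residual n)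

def digit (n : ℕ) : G →+ G.layer n := (G.layerProj n).comp (σ.residual n)

theorem coe_residual_succ (g : G) (n : ℕ) :
    (σ.residual (n + 1) g : ℕ → A) = σ.residual n g - σ.lift n (σ.digit n g) :=
  rfl

theorem sub_residual (g : G) (m : ℕ) :
    (g : ℕ → A) - σ.residual m g = ∑ n ∈ range m, (σ.lift n (σ.digit n g) : ℕ → A) := by
  induction m with
  | zero => exact (sub_self _).trans (by simp)
  | succ m ih => rw [sum_range_succ, ← ih, coe_residual_succ]; abel

theorem residual_of_mem {g : G} {k : ℕ} (hg : (g : ℕ → A) ∈ G.vanishingBelow k) {m : ℕ}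
    (hm : m ≤ k) : (σ.residual m g : ℕ → A) = g := by
  induction m with
  | zero => rfl
  | succ m ih =>
    have hdigit : σ.digit m g = 0 := by
      ext
      simp [digit, ih (by omega), hg.2 m hm]
    rw [coe_residual_succ, hdigit, map_zero, ZeroMemClass.coe_zero, sub_zero, ih (by omega)]

theorem digit_eq_zero_of_mem {g : G} {n : ℕ} (hg : (g : ℕ → A) ∈ G.vanishingBelow (n + 1)) :
    σ.digit n g = 0 := by
  ext
  simp [digit, σ.residual_of_mem hg (Nat.le_succ n), hg.2 n (Nat.lt_succ_self n)]

-- Only the terms with `n ≤ i` can be nonzero at coordinate `i`.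
def series : (∀ n, G.layer n) →+ (ℕ → A) :=
  AddMonoidHom.mk' (fun h i => ∑ n ∈ range (i + 1), (σ.lift n (h n) : ℕ → A) i) fun h h' => by
    ext i
    simp [sum_add_distrib]

theorem series_apply_eq_partial_sum (h : ∀ n, G.layer n) {i m : ℕ} (him : i < m) :
    σ.series h i = (∑ n ∈ range m, (σ.lift n (h n) : ℕ → A)) i := by
  rw [Finset.sum_apply]
  refine sum_subset (range_subset_range.2 him) fun n _ hn => (σ.lift n (h n)).2.2 i ?_
  simpa using hn

theorem series_apply_of_forall_lt {h : ∀ n, G.layer n} {n : ℕ} (hn : ∀ k < n, h k = 0) :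
    σ.series h n = h n := by
  change ∑ k ∈ range (n + 1), (σ.lift k (h k) : ℕ → A) n = h n
  rw [sum_range_succ, σ.lift_apply_self, sum_eq_zero fun k hk => by simp [hn k (mem_range.1 hk)],
    zero_add]

theorem series_injective : Function.Injective σ.series := by
  refine (injective_iff_map_eq_zero _).2 fun h hh => funext fun n => ?_
  induction n using Nat.strong_induction_on with
  | _ n ih => exact Subtype.ext (by simpa [hh] using (σ.series_apply_of_forall_lt ih).symm)

theorem series_digit (g : G) : σ.series (fun n => σ.digit n g) = g := by
  funext i
  rw [σ.series_apply_eq_partial_sum _ (Nat.lt_succ_self i), ← sub_residual, Pi.sub_apply,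
    (σ.residual (i + 1) g).2.2 i (Nat.lt_succ_self i), sub_zero]

theorem series_mem [TopologicalSpace A] (hG : IsClosed (G : Set (ℕ → A))) (h : ∀ n, G.layer n) :
    σ.series h ∈ G := by
  refine hG.mem_of_tendsto (b := Filter.atTop)
    (f := fun m => ∑ n ∈ range m, (σ.lift n (h n) : ℕ → A)) ?_
    (Filter.Eventually.of_forall fun m => G.sum_mem fun n _ => (σ.lift n (h n)).2.1)
  refine tendsto_pi_nhds.2 fun i => tendsto_const_nhds.congr' ?_
  filter_upwards [Filter.eventually_gt_atTop i] with m him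
  exact σ.series_apply_eq_partial_sum h him

variable [TopologicalSpace A] [DiscreteTopology A]

theorem continuous_digit (n : ℕ) : Continuous (σ.digit n) := by
  refine continuous_of_continuousAt_zero _ ?_
  rw [ContinuousAt, nhds_discrete (G.layer n), Filter.tendsto_pure]
  have hnear : ∀ᶠ g : G in nhds 0, ∀ m ∈ range (n + 1), (g : ℕ → A) m = 0 :=
    (Filter.eventually_all_finset _).2 fun m _ =>
      ((continuous_apply m).comp continuous_subtype_val).continuousAt.eventually_mem
        ((isOpen_discrete {0}).mem_nhds rfl)
  filter_upwards [hnear] with g hg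
  simp only [map_zero]
  exact σ.digit_eq_zero_of_mem ⟨g.2, fun m hm => hg m (mem_range.2 hm)⟩

theorem continuous_series : Continuous σ.series :=
  continuous_pi fun i => continuous_finsetSum (range (i + 1)) fun n _ =>
    (continuous_of_discreteTopology (f := fun x : G.layer n => (σ.lift n x : ℕ → A) i)).comp
      (continuous_apply n)

def continuousAddEquiv (hG : IsClosed (G : Set (ℕ → A))) : G ≃ₜ+ ∀ n, G.layer n where
  toFun g n := σ.digit n g
  invFun h := ⟨σ.series h, σ.series_mem hG h⟩
  left_inv g := Subtype.ext (σ.series_digit g)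
  right_inv h := σ.series_injective (σ.series_digit ⟨σ.series h, σ.series_mem hG h⟩)
  map_add' g g' := funext fun n => map_add (σ.digit n) g g'
  continuous_toFun := continuous_pi σ.continuous_digit
  continuous_invFun := σ.continuous_series.subtype_mk _

end LayerSplitting

end AddSubgroup

def ContinuousAddEquiv.piCongrRight {ι : Type*} {M N : ι → Type*} [∀ i, Add (M i)]
    [∀ i, Add (N i)] [∀ i, TopologicalSpace (M i)] [∀ i, TopologicalSpace (N i)]
    (e : ∀ i, M i ≃ₜ+ N i) : (∀ i, M i) ≃ₜ+ ∀ i, N i :=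
  .mk' (Homeomorph.piCongrRight fun i => (e i).toHomeomorph) fun x y =>
    funext fun i => map_add (e i) (x i) (y i)

def ContinuousAddEquiv.piProdEquivSigmaArrowProd {ι : Type*} (κ₁ κ₂ : ι → Type*)
    (M₁ M₂ : Type*) [Add M₁] [Add M₂] [TopologicalSpace M₁] [TopologicalSpace M₂] :
    (∀ i, (κ₁ i → M₁) × (κ₂ i → M₂)) ≃ₜ+ ((Σ i, κ₁ i) → M₁) × ((Σ i, κ₂ i) → M₂) where
  toFun f := (fun p => (f p.1).1 p.2, fun p => (f p.1).2 p.2)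
  invFun g i := (fun k => g.1 ⟨i, k⟩, fun k => g.2 ⟨i, k⟩)
  left_inv _ := rfl
  right_inv _ := rfl
  map_add' _ _ := rfl
  continuous_toFun := by fun_prop
  continuous_invFun := by fun_prop

def AddEquiv.toContinuousAddEquivOfDiscrete {M N : Type*} [Add M] [Add N] [TopologicalSpace M]
    [TopologicalSpace N] [DiscreteTopology M] [DiscreteTopology N] (e : M ≃+ N) : M ≃ₜ+ N :=
  { e with
    continuous_toFun := continuous_of_discreteTopology
    continuous_invFun := continuous_of_discreteTopology }

theorem Module.Free.exists_addEquiv_pi_int_prod_pi_zOmega (M : Type) [AddCommGroup M]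
    [Countable M] [Module.Free ℤ M] : ∃ (ι κ : Type) (_ : Finite ι) (_ : Finite κ),
      Nonempty (M ≃+ (ι → ℤ) × (κ → ZOmega)) := by
  let b := Module.Free.chooseBasis ℤ M
  by_cases hfin : Finite (Module.Free.ChooseBasisIndex ℤ M)
  · exact ⟨_, Empty, hfin, inferInstance,
      ⟨(b.repr.trans (Finsupp.linearEquivFunOnFinite ℤ ℤ _)).toAddEquiv.trans
        AddEquiv.prodUnique.symm⟩⟩
  · have : Infinite (Module.Free.ChooseBasisIndex ℤ M) := not_finite_iff_infinite.1 hfin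
    have : Countable (Module.Free.ChooseBasisIndex ℤ M) := b.injective.countable
    let e : Module.Free.ChooseBasisIndex ℤ M ≃ ℕ := (nonempty_denumerable _).some.eqv
    let f : M ≃+ ZOmega := (b.repr.trans (Finsupp.domLCongr e)).toAddEquiv
    exact ⟨Empty, Unit, inferInstance, inferInstance,
      ⟨f.trans ((AddEquiv.funUnique Unit ZOmega).symm.trans AddEquiv.uniqueProd.symm)⟩⟩

theorem AddSubgroup.free_zOmega (H : AddSubgroup ZOmega) : Module.Free ℤ H :=
  have : Module.Free ℤ H.toIntSubmodule := Submodule.free_finsupp_nat (R := ℤ) H.toIntSubmodule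
  Module.Free.of_equiv (M := H.toIntSubmodule) (AddEquiv.refl H).toIntLinearEquiv

/-- Every closed subgroup `G` of `(ℤ^(ω))^ω` is topologically isomorphic to
`ℤ^α × (ℤ^(ω))^β` for some `α, β ≤ ω` (encoded as powers indexed by countable types). -/
theorem closed_subgroup_of_product_of_free
    (G : AddSubgroup (ℕ → ZOmega)) (hG : IsClosed (G : Set (ℕ → ZOmega))) :
    ∃ (ι κ : Type) (_ : Countable ι) (_ : Countable κ)
      (e : G ≃+ ((ι → ℤ) × (κ → ZOmega))), Continuous e ∧ Continuous e.symm := by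
  have := fun n => (G.layer n).free_zOmega
  obtain ⟨σ⟩ := AddSubgroup.LayerSplitting.nonempty_of_projective G
  choose ι κ _ _ e using fun n =>
    Module.Free.exists_addEquiv_pi_int_prod_pi_zOmega (G.layer n)
  let E := (σ.continuousAddEquiv hG).trans
    ((ContinuousAddEquiv.piCongrRight fun n => (e n).some.toContinuousAddEquivOfDiscrete).trans
      (ContinuousAddEquiv.piProdEquivSigmaArrowProd ι κ ℤ ZOmega))
  exact ⟨Σ n, ι n, Σ n, κ n, inferInstance, inferInstance, E.toAddEquiv, E.continuous,
    E.symm.continuous⟩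
end

section
/- Let (A_k)_{k∈ℕ} be an inverse sequence of topological abelian groups with continuous group homomorphisms p_{k+1} : A_{k+1} → A_k as bonding maps, where for each k the group A_k is topologically isomorphic to ℝ^{n_k} × 𝕋^{m_k} for some n_k, m_k ∈ ℕ. Then the inverse limit lim_k A_k, realized as the closed subgroup of ∏_k A_k consisting of all threads (x_k) with p_{k+1}(x_{k+1}) = x_k for all k, is connected. -/
/-!
Continuous homomorphisms between the groups `ℝⁿ × 𝕋ᵐ` lift to linear maps between their
universal covers `ℝⁿ × ℝᵐ`, and they map torus into torus since a compact subgroup of `ℝⁿ` is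
trivial. A thread `s` of the inverse limit therefore splits as `s = π ∘ w + c`, with `π` the
covering map: here `w` is a thread of covering vectors with the same `ℝⁿ`-parts as `s`, which
exists by the Mittag-Leffler argument because descending chains of affine subspaces of a
finite-dimensional space stabilize, and `c` is a thread of tori. The threads `w` form a vector
space, and the threads of tori form an inverse limit of compact connected spaces, which is
connected as a nested intersection of compact connected sets. So the inverse limit is a
continuous image of a connected space.
-/

open Set Function

theorem IsPreconnected.iInter_of_directed_of_isCompact {Z ι : Type*} [TopologicalSpace Z]
    [T2Space Z] [Nonempty ι] {K : ι → Set Z} (hdir : Directed (· ⊇ ·) K)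
    (hcpt : ∀ i, IsCompact (K i)) (hconn : ∀ i, IsPreconnected (K i)) :
    IsPreconnected (⋂ i, K i) := by
  have hK : IsCompact (⋂ i, K i) :=
    (hcpt (Classical.arbitrary ι)).of_isClosed_subset (isClosed_iInter fun i => (hcpt i).isClosed)
      (iInter_subset _ _)
  rw [isPreconnected_closed_iff]
  intro t t' ht ht' hcover hnet hnet'
  by_contra hdisj
  -- open neighbourhoods separating the two pieces of `⋂ i, K i` already cover some `K i`
  obtain ⟨U, U', hU, hU', htU, htU', hUU'⟩ := SeparatedNhds.of_isCompact_isCompact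
    (hK.inter_right ht) (hK.inter_right ht')
    (disjoint_left.2 fun x hx hx' => hdisj ⟨x, hx.1, hx.2, hx'.2⟩)
  obtain ⟨i, hi⟩ := exists_subset_nhds_of_isCompact hdir hcpt fun x hx =>
    (hU.union hU').mem_nhds ((hcover hx).imp (fun h => htU ⟨hx, h⟩) fun h => htU' ⟨hx, h⟩)
  obtain ⟨x, hx⟩ := hnet
  obtain ⟨x', hx'⟩ := hnet'
  obtain ⟨y, -, hyU, hyU'⟩ := hconn i U U' hU hU' hi ⟨x, iInter_subset K i hx.1, htU hx⟩
    ⟨x', iInter_subset K i hx'.1, htU' hx'⟩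
  exact disjoint_left.1 hUU' hyU hyU'

theorem AffineSubspace.antitone_stabilizes {R V P : Type*} [Ring R] [AddCommGroup V] [Module R V]
    [IsArtinian R V] [AddTorsor V P] {S : ℕ → AffineSubspace R P} (hS : Antitone S)
    (hne : ∀ d, (S d : Set P).Nonempty) : ∃ d₀, ∀ d ≥ d₀, S d = S d₀ := by
  obtain ⟨d₀, hd₀⟩ := IsArtinian.monotone_stabilizes
    ⟨fun d => OrderDual.toDual (S d).direction, fun _ _ h => AffineSubspace.direction_le (hS h)⟩
  exact ⟨d₀, fun d hd => AffineSubspace.eq_of_direction_eq_of_nonempty_of_le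
    (hd₀ d hd).symm (hne d) (hS hd)⟩

theorem AddMonoidHom.eq_zero_of_compactSpace {G E : Type*} [AddMonoid G] [TopologicalSpace G]
    [CompactSpace G] [NormedAddCommGroup E] [NormedSpace ℝ E] (f : G →+ E) (hf : Continuous f) :
    f = 0 := by
  ext x
  obtain ⟨C, hC⟩ := (isCompact_range hf).isBounded.exists_norm_le
  by_contra hx
  obtain ⟨n, hn⟩ := exists_nat_gt (C / ‖f x‖)
  have hbound : n * ‖f x‖ ≤ C := by
    simpa only [map_nsmul, RCLike.norm_nsmul ℝ, nsmul_eq_mul] using hC _ (mem_range_self (n • x))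
  rw [div_lt_iff₀ (norm_pos_iff.2 hx)] at hn
  linarith

theorem AddCircle.exists_continuousLinearMap_lift {p : ℝ} {E : Type*} [AddCommGroup E]
    [Module ℝ E] [TopologicalSpace E] [IsTopologicalAddGroup E] [ContinuousSMul ℝ E]
    [LocallyConvexSpace ℝ E] (φ : E →+ AddCircle p) (hφ : Continuous φ) :
    ∃ ψ : E →L[ℝ] ℝ, ∀ x, (ψ x : AddCircle p) = φ x := by
  have hlift := (AddCircle.isCoveringMap_coe p).existsUnique_continuousMap_lifts ⟨φ, hφ⟩ 0 0
    (by simp)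
  obtain ⟨ψ, hψ0, hψ⟩ := hlift.exists
  replace hψ (x : E) : (ψ x : AddCircle p) = φ x := congrFun hψ x
  -- `z ↦ ψ (z + y) - ψ y` is another lift of `φ` vanishing at `0`
  have hadd (x y : E) : ψ (x + y) = ψ x + ψ y := by
    have h := hlift.unique (y₁ := ⟨fun z => ψ (z + y) - ψ y, by fun_prop⟩) ⟨by simp, ?_⟩
      ⟨hψ0, funext hψ⟩
    · simpa [sub_eq_iff_eq_add] using DFunLike.congr_fun h x
    · funext z
      simp only [comp_apply, ContinuousMap.coe_mk, AddCircle.coe_sub, hψ, map_add,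
        add_sub_cancel_right]
  exact ⟨(AddMonoidHom.mk' ψ hadd).toRealLinearMap ψ.continuous, hψ⟩

section InverseLimit

variable {X Y : ℕ → Type*} (f : ∀ k, X (k + 1) → X k)

def inverseLimit : Set (∀ k, X k) := {x | ∀ k, f k (x (k + 1)) = x k}

theorem mapsTo_inverseLimit {g : ∀ k, Y (k + 1) → Y k} (e : ∀ k, X k → Y k)
    (he : ∀ k x, g k (e (k + 1) x) = e k (f k x)) :
    MapsTo (fun x k => e k (x k)) (inverseLimit f) (inverseLimit g) := fun x hx k => by
  simp only [he, hx k]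

theorem preimage_inverseLimit_conj (e : ∀ k, X k ≃ Y k) :
    (fun x k => e k (x k)) ⁻¹' inverseLimit (fun k => e k ∘ f k ∘ (e (k + 1)).symm) =
      inverseLimit f := by
  ext x
  simp [inverseLimit]

theorem exists_mem_inverseLimit_of_surjOn (E : ∀ k, Set (X k)) (h0 : (E 0).Nonempty)
    (hsurj : ∀ k, SurjOn (f k) (E (k + 1)) (E k)) : ∃ x ∈ inverseLimit f, ∀ k, x k ∈ E k := by
  let x : ∀ k, E k := fun k => Nat.rec (motive := fun k => E k) ⟨h0.choose, h0.choose_spec⟩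
    (fun k y => ⟨(hsurj k y.2).choose, (hsurj k y.2).choose_spec.1⟩) k
  exact ⟨fun k => x k, fun k => (hsurj k (x k).2).choose_spec.2, fun k => (x k).2⟩

def iterImage (F : ∀ k, Set (X k)) : ℕ → ∀ k, Set (X k)
  | 0, k => F k
  | d + 1, k => f k '' iterImage F d (k + 1)

variable {f} {F : ∀ k, Set (X k)}

theorem iterImage_succ_subset (hF : ∀ k, MapsTo (f k) (F (k + 1)) (F k)) (d k : ℕ) :
    iterImage f F (d + 1) k ⊆ iterImage f F d k := by
  induction d generalizing k with
  | zero => exact (hF k).image_subset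
  | succ d ih => exact image_mono (ih (k + 1))

theorem antitone_iterImage (hF : ∀ k, MapsTo (f k) (F (k + 1)) (F k)) (k : ℕ) :
    Antitone fun d => iterImage f F d k :=
  antitone_nat_of_succ_le fun d => iterImage_succ_subset hF d k

theorem iterImage_nonempty (hne : ∀ k, (F k).Nonempty) (d k : ℕ) :
    (iterImage f F d k).Nonempty := by
  induction d generalizing k with
  | zero => exact hne k
  | succ d ih => exact (ih (k + 1)).image _

theorem exists_mem_inverseLimit_of_iterImage_stabilizes
    (hF : ∀ k, MapsTo (f k) (F (k + 1)) (F k)) (hne : ∀ k, (F k).Nonempty)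
    (hstab : ∀ k, ∃ d₀, ∀ d ≥ d₀, iterImage f F d k = iterImage f F d₀ k) :
    ∃ x ∈ inverseLimit f, ∀ k, x k ∈ F k := by
  choose d₀ hd₀ using hstab
  have hsurj : ∀ k, SurjOn (f k) (iterImage f F (d₀ (k + 1)) (k + 1)) (iterImage f F (d₀ k) k) := by
    intro k
    let d := max (d₀ k) (d₀ (k + 1))
    rw [← hd₀ k (d + 1) (by omega), ← hd₀ (k + 1) d (by omega)]
    exact surjOn_image _ _
  obtain ⟨x, hx, hxE⟩ := exists_mem_inverseLimit_of_surjOn f (fun k => iterImage f F (d₀ k) k)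
    (iterImage_nonempty hne _ 0) hsurj
  exact ⟨x, hx, fun k => antitone_iterImage hF k (Nat.zero_le _) (hxE k)⟩

section Compact

variable (f)

def inverseLimitUpTo (N : ℕ) : Set (∀ k, X k) := {x | ∀ j < N, f j (x (j + 1)) = x j}

def pullDown : ℕ → (∀ k, X k) → ∀ k, X k
  | 0, y => y
  | N + 1, y => pullDown N (update y N (f N (y (N + 1))))

theorem pullDown_of_le {N j : ℕ} (h : N ≤ j) (y : ∀ k, X k) : pullDown f N y j = y j := by
  induction N generalizing y with
  | zero => rfl
  | succ N ih => rw [pullDown, ih (by omega), update_of_ne (by omega)]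

theorem pullDown_mem_inverseLimitUpTo (N : ℕ) (y : ∀ k, X k) :
    pullDown f N y ∈ inverseLimitUpTo f N := by
  induction N generalizing y with
  | zero => intro j hj; omega
  | succ N ih =>
    intro j hj
    rcases Nat.lt_succ_iff_lt_or_eq.1 hj with hj | rfl
    · exact ih _ j hj
    · rw [pullDown, pullDown_of_le f le_rfl, pullDown_of_le f (Nat.le_succ j), update_self,
        update_of_ne (by omega)]

theorem pullDown_eq_self {N : ℕ} {y : ∀ k, X k} (hy : y ∈ inverseLimitUpTo f N) :
    pullDown f N y = y := by
  induction N generalizing y with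
  | zero => rfl
  | succ N ih =>
    rw [pullDown, hy N (Nat.lt_succ_self N), update_eq_self]
    exact ih fun j hj => hy j (by omega)

theorem range_pullDown (N : ℕ) : range (pullDown f N) = inverseLimitUpTo f N :=
  Subset.antisymm (range_subset_iff.2 (pullDown_mem_inverseLimitUpTo f N))
    fun y hy => ⟨y, pullDown_eq_self f hy⟩

variable [∀ k, TopologicalSpace (X k)]

theorem continuous_pullDown (hf : ∀ k, Continuous (f k)) (N : ℕ) : Continuous (pullDown f N) := by
  induction N with
  | zero => exact continuous_id
  | succ N ih =>
    exact ih.comp (continuous_id.update N ((hf N).comp (continuous_apply (N + 1))))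

theorem isPreconnected_inverseLimit [∀ k, CompactSpace (X k)] [∀ k, T2Space (X k)]
    [∀ k, PreconnectedSpace (X k)] (hf : ∀ k, Continuous (f k)) :
    IsPreconnected (inverseLimit f) := by
  have hinter : inverseLimit f = ⋂ N, inverseLimitUpTo f N := by
    ext x
    exact ⟨fun hx => mem_iInter.2 fun N j _ => hx j,
      fun hx j => mem_iInter.1 hx (j + 1) j (Nat.lt_succ_self j)⟩
  rw [hinter]
  refine IsPreconnected.iInter_of_directed_of_isCompact
    (Antitone.directed_ge fun M N hMN x hx j hj => hx j (by omega)) (fun N => ?_) (fun N => ?_)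
  · simp only [inverseLimitUpTo, ofPred_forall]
    exact (isClosed_iInter fun j => isClosed_iInter fun _ =>
      isClosed_eq ((hf j).comp (continuous_apply _)) (continuous_apply j)).isCompact
  · rw [← range_pullDown]
    exact isPreconnected_range (continuous_pullDown f hf N)

end Compact

end InverseLimit

section Affine

variable {R : Type*} [Ring R] {V : ℕ → Type*} [∀ k, AddCommGroup (V k)] [∀ k, Module R (V k)]

theorem exists_affineSubspace_coe_eq_iterImage (f : ∀ k, V (k + 1) →ᵃ[R] V k)
    (F : ∀ k, AffineSubspace R (V k)) (d k : ℕ) :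
    ∃ S : AffineSubspace R (V k),
      (S : Set (V k)) = iterImage (fun k => f k) (fun k => F k) d k := by
  induction d generalizing k with
  | zero => exact ⟨F k, rfl⟩
  | succ d ih =>
    obtain ⟨S, hS⟩ := ih (k + 1)
    exact ⟨S.map (f k), by rw [AffineSubspace.coe_map, hS]; rfl⟩

theorem exists_mem_inverseLimit_of_affineSubspace [∀ k, IsArtinian R (V k)]
    (f : ∀ k, V (k + 1) →ᵃ[R] V k) (F : ∀ k, AffineSubspace R (V k))
    (hF : ∀ k, MapsTo (f k) (F (k + 1)) (F k)) (hne : ∀ k, (F k : Set (V k)).Nonempty) :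
    ∃ x ∈ inverseLimit (fun k => f k), ∀ k, x k ∈ F k := by
  refine exists_mem_inverseLimit_of_iterImage_stabilizes hF hne fun k => ?_
  choose S hS using fun d => exists_affineSubspace_coe_eq_iterImage f F d k
  obtain ⟨d₀, hd₀⟩ := AffineSubspace.antitone_stabilizes (S := S)
    (fun a b h => by simpa only [← SetLike.coe_subset_coe, hS] using antitone_iterImage hF k h)
    (fun d => hS d ▸ iterImage_nonempty hne d k)
  exact ⟨d₀, fun d hd => by rw [← hS, ← hS, hd₀ d hd]⟩

end Affine

theorem convex_inverseLimit {E F : ℕ → Type*} [∀ k, AddCommGroup (E k)] [∀ k, Module ℝ (E k)]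
    [∀ k, FunLike (F k) (E (k + 1)) (E k)] [∀ k, LinearMapClass (F k) ℝ (E (k + 1)) (E k)]
    (f : ∀ k, F k) : Convex ℝ (inverseLimit fun k => ⇑(f k)) :=
  fun x hx y hy a b _ _ _ k => by simp [hx k, hy k]

section AddMonoidHom

variable {G : ℕ → Type*} [∀ k, AddCommGroup (G k)] {f : ∀ k, G (k + 1) →+ G k}
  {x y : ∀ k, G k}

theorem add_mem_inverseLimit (hx : x ∈ inverseLimit fun k => f k)
    (hy : y ∈ inverseLimit fun k => f k) : x + y ∈ inverseLimit fun k => f k :=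
  fun k => by simp [hx k, hy k]

theorem sub_mem_inverseLimit (hx : x ∈ inverseLimit fun k => f k)
    (hy : y ∈ inverseLimit fun k => f k) : x - y ∈ inverseLimit fun k => f k :=
  fun k => by simp [hx k, hy k]

end AddMonoidHom

theorem fst_map_eq_of_fst_eq {V W C D : Type*} [AddCommGroup V] [TopologicalSpace V]
    [AddCommGroup C] [TopologicalSpace C] [CompactSpace C] [NormedAddCommGroup W]
    [NormedSpace ℝ W] [AddCommGroup D] [TopologicalSpace D] {P : V × C →+ W × D}
    (hP : Continuous P) {a b : V × C} (h : a.1 = b.1) : (P a).1 = (P b).1 := by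
  have hzero := AddMonoidHom.eq_zero_of_compactSpace ((AddMonoidHom.fst _ _).comp
    (P.comp (AddMonoidHom.inr _ _))) (hP.comp (continuous_const.prodMk continuous_id)).fst
  have hab : a - b = (0, (a - b).2) := Prod.ext (sub_eq_zero.2 h) rfl
  rw [← sub_eq_zero, ← Prod.fst_sub, ← map_sub, hab]
  exact DFunLike.congr_fun hzero (a - b).2

theorem isPreconnected_inverseLimit_compactPart {V C : ℕ → Type*} [∀ k, NormedAddCommGroup (V k)]
    [∀ k, NormedSpace ℝ (V k)] [∀ k, AddCommGroup (C k)] [∀ k, TopologicalSpace (C k)]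
    [∀ k, CompactSpace (C k)] [∀ k, T2Space (C k)] [∀ k, PreconnectedSpace (C k)]
    {P : ∀ k, V (k + 1) × C (k + 1) →+ V k × C k} (hP : ∀ k, Continuous (P k)) :
    IsPreconnected
      {s : ∀ k, V k × C k | s ∈ inverseLimit (fun k => P k) ∧ ∀ k, (s k).1 = 0} := by
  let T k (t : C (k + 1)) : C k := (P k (0, t)).2
  have hT k : Continuous (T k) := ((hP k).comp (Continuous.prodMk_right 0)).snd
  have himage : (fun t k => ((0 : V k), t k)) '' inverseLimit T =
      {s : ∀ k, V k × C k | s ∈ inverseLimit (fun k => P k) ∧ ∀ k, (s k).1 = 0} := by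
    apply Subset.antisymm
    · rintro _ ⟨t, ht, rfl⟩
      refine ⟨fun k => Prod.ext ?_ (ht k), fun k => rfl⟩
      simpa using fst_map_eq_of_fst_eq (hP k) (a := (0, t (k + 1))) (b := 0) rfl
    · rintro s ⟨hs, hs0⟩
      have hs' k : s k = (0, (s k).2) := Prod.ext (hs0 k) rfl
      refine ⟨fun k => (s k).2, fun k => ?_, funext fun k => (hs' k).symm⟩
      simp only [T, ← hs' (k + 1), hs k]
  rw [← himage]
  exact (isPreconnected_inverseLimit T hT).image _
    (continuous_pi fun k => continuous_const.prodMk (continuous_apply k)).continuousOn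

def torusCover (V ι : Type*) [AddCommGroup V] : V × (ι → ℝ) →+ V × (ι → UnitAddCircle) :=
  (AddMonoidHom.id V).prodMap ((QuotientAddGroup.mk' _).compLeft ι)

theorem continuous_torusCover (V ι : Type*) [AddCommGroup V] [TopologicalSpace V] :
    Continuous (torusCover V ι) :=
  continuous_id.prodMap (continuous_pi fun i =>
    (AddCircle.continuous_mk' 1).comp (continuous_apply i))

theorem exists_continuousLinearMap_lift_torusCover {E V ι : Type*} [AddCommGroup E]
    [Module ℝ E] [TopologicalSpace E] [IsTopologicalAddGroup E] [ContinuousSMul ℝ E]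
    [LocallyConvexSpace ℝ E] [AddCommGroup V] [Module ℝ V] [TopologicalSpace V]
    [ContinuousSMul ℝ V] [T2Space V] (F : E →+ V × (ι → UnitAddCircle)) (hF : Continuous F) :
    ∃ L : E →L[ℝ] V × (ι → ℝ), ∀ x, torusCover V ι (L x) = F x := by
  choose ψ hψ using fun i => AddCircle.exists_continuousLinearMap_lift
    ((Pi.evalAddMonoidHom (fun _ : ι => UnitAddCircle) i).comp ((AddMonoidHom.snd _ _).comp F))
    ((continuous_apply i).comp hF.snd :)
  refine ⟨(((AddMonoidHom.fst _ _).comp F).toRealLinearMap (continuous_fst.comp hF)).prod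
    (ContinuousLinearMap.pi ψ), fun x => Prod.ext rfl (funext fun i => hψ i x)⟩

section VectorTorus

variable {V ι : ℕ → Type*} [∀ k, NormedAddCommGroup (V k)] [∀ k, NormedSpace ℝ (V k)]
  [∀ k, FiniteDimensional ℝ (V k)] [∀ k, Finite (ι k)]
  {P : ∀ k, V (k + 1) × (ι (k + 1) → UnitAddCircle) →+ V k × (ι k → UnitAddCircle)}

theorem exists_mem_inverseLimit_fst_eq (hP : ∀ k, Continuous (P k))
    (L : ∀ k, V (k + 1) × (ι (k + 1) → ℝ) →L[ℝ] V k × (ι k → ℝ))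
    (hL : ∀ k w, torusCover _ _ (L k w) = P k (torusCover _ _ w))
    {s : ∀ k, V k × (ι k → UnitAddCircle)} (hs : s ∈ inverseLimit fun k => P k) :
    ∃ w : ∀ k, V k × (ι k → ℝ), w ∈ inverseLimit (fun k => L k) ∧ ∀ k, (w k).1 = (s k).1 := by
  let F k : AffineSubspace ℝ (V k × (ι k → ℝ)) :=
    AffineSubspace.mk' ((s k).1, 0) (LinearMap.ker (LinearMap.fst ℝ (V k) (ι k → ℝ)))
  have hF : ∀ k w, w ∈ F k ↔ w.1 = (s k).1 := fun k w => by
    simp [F, AffineSubspace.mem_mk', sub_eq_zero]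
  obtain ⟨w, hw, hwF⟩ := exists_mem_inverseLimit_of_affineSubspace
    (fun k => (L k : _ →ₗ[ℝ] _).toAffineMap) F (fun k w hw => by
      simp only [SetLike.mem_coe, hF] at hw ⊢
      calc (L k w).1 = (P k (torusCover _ _ w)).1 := congrArg Prod.fst (hL k w)
        _ = (P k (s (k + 1))).1 := fst_map_eq_of_fst_eq (hP k) hw
        _ = (s k).1 := congrArg Prod.fst (hs k))
    (fun k => ⟨((s k).1, 0), (hF k _).2 rfl⟩)
  exact ⟨w, hw, fun k => (hF k _).1 (hwF k)⟩

theorem isConnected_inverseLimit_prod_torus (hP : ∀ k, Continuous (P k)) :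
    IsConnected {s : ∀ k, V k × (ι k → UnitAddCircle) | ∀ k, P k (s (k + 1)) = s k} := by
  choose L hL using fun k => exists_continuousLinearMap_lift_torusCover
    ((P k).comp (torusCover _ _)) ((hP k).comp (continuous_torusCover _ _))
  let cover (w : ∀ k, V k × (ι k → ℝ)) k := torusCover (V k) (ι k) (w k)
  have hcover : MapsTo cover (inverseLimit fun k => L k) (inverseLimit fun k => P k) :=
    mapsTo_inverseLimit _ _ fun k w => (hL k w).symm
  let K :=
    {s : ∀ k, V k × (ι k → UnitAddCircle) | s ∈ inverseLimit (fun k => P k) ∧ ∀ k, (s k).1 = 0}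
  have hdecomp : (fun q => cover q.1 + q.2) '' (inverseLimit (fun k => L k) ×ˢ K) =
      inverseLimit fun k => P k := by
    apply Subset.antisymm
    · rintro _ ⟨⟨w, c⟩, ⟨hw, hc⟩, rfl⟩
      exact add_mem_inverseLimit (hcover hw) hc.1
    · intro s hs
      obtain ⟨w, hw, hws⟩ := exists_mem_inverseLimit_fst_eq hP L hL hs
      refine ⟨(w, s - cover w), ⟨hw, sub_mem_inverseLimit hs (hcover hw), fun k => ?_⟩,
        add_sub_cancel _ _⟩
      exact sub_eq_zero.2 (hws k).symm
  have hconn : IsPreconnected ((fun q => cover q.1 + q.2) '' (inverseLimit (fun k => L k) ×ˢ K)) :=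
    ((convex_inverseLimit (E := fun k => V k × (ι k → ℝ)) L).isPreconnected.prod
      (isPreconnected_inverseLimit_compactPart hP)).image _
      ((continuous_pi fun k => (continuous_torusCover _ _).comp
        ((continuous_apply k).comp continuous_fst)).add continuous_snd).continuousOn
  rw [hdecomp] at hconn
  exact ⟨⟨0, fun k => map_zero (P k)⟩, hconn⟩

end VectorTorus

theorem inverse_limit_of_connected_lie_groups_is_connected_general
    (A : ℕ → Type) [∀ k, AddCommGroup (A k)] [∀ k, TopologicalSpace (A k)]
    (hA : ∀ k, ∃ (n m : ℕ) (e : A k ≃+ ((Fin n → ℝ) × (Fin m → UnitAddCircle))),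
      Continuous e ∧ Continuous e.symm)
    (p : ∀ k, A (k + 1) →+ A k) (hp : ∀ k, Continuous (p k)) :
    IsConnected {x : ∀ k, A k | ∀ k, p k (x (k + 1)) = x k} := by
  choose n m e he hsymm using hA
  let h k : A k ≃ₜ (Fin (n k) → ℝ) × (Fin (m k) → UnitAddCircle) := ⟨(e k).toEquiv, he k, hsymm k⟩
  let P k := ((e k).toAddMonoidHom.comp (p k)).comp (e (k + 1)).symm.toAddMonoidHom
  have hP k : Continuous (P k) := (he k).comp ((hp k).comp (hsymm (k + 1)))
  change IsConnected (inverseLimit (X := A) fun k => p k)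
  rw [← preimage_inverseLimit_conj _ fun k => (h k).toEquiv]
  exact (Homeomorph.piCongrRight h).isConnected_preimage.2
    (isConnected_inverseLimit_prod_torus (V := fun k => Fin (n k) → ℝ) (ι := fun k => Fin (m k)) hP)

/-- Let `(A k)_{k ∈ ℕ}` be an inverse sequence of topological abelian groups
with continuous group homomorphisms `p k : A (k+1) → A k` as bonding maps, where each `A k` is
topologically isomorphic to `ℝ^{n_k} × 𝕋^{m_k}` for some `n_k, m_k ∈ ℕ`. Then the inverse
limit `lim_k A k`, realized as the closed subgroup of `∏ k, A k` consisting of all threads,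
is connected. -/
theorem inverse_limit_of_connected_lie_groups_is_connected
    (A : ℕ → Type) [∀ k, AddCommGroup (A k)] [∀ k, TopologicalSpace (A k)]
    [∀ k, IsTopologicalAddGroup (A k)]
    (hA : ∀ k, ∃ (n m : ℕ) (e : A k ≃+ ((Fin n → ℝ) × (Fin m → UnitAddCircle))),
      Continuous e ∧ Continuous e.symm)
    (p : ∀ k, A (k + 1) →+ A k) (hp : ∀ k, Continuous (p k)) :
    IsConnected {x : ∀ k, A k | ∀ k, p k (x (k + 1)) = x k} :=
  inverse_limit_of_connected_lie_groups_is_connected_general A hA p hp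
end

section
/- Let D be a countable divisible abelian group. If there is a group homomorphism from D onto a closed subgroup of ℝ^ω × 𝕋^ω that is a homeomorphism onto its image when D carries the discrete topology (i.e., D embeds as a countable discrete closed subgroup of ℝ^ω × 𝕋^ω), then D = 0. -/
/-- Let `D` be a countable divisible abelian group. If `D` embeds as a
countable discrete closed subgroup of `ℝ^ω × 𝕋^ω` (i.e. there is an injective group
homomorphism `f` from `D` into `ℝ^ω × 𝕋^ω` with closed range whose range carries the discrete
subspace topology, so that `f` is a homeomorphism onto its image when `D` is discrete), then
`D = 0`. -/
theorem no_nonzero_countable_divisible_closed_discrete_subgroup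
    (D : Type) [AddCommGroup D] [Countable D]
    (hdiv : ∀ (x : D) (n : ℕ), 1 ≤ n → ∃ y : D, n • y = x)
    (f : D →+ ((ℕ → ℝ) × (ℕ → UnitAddCircle)))
    (hinj : Function.Injective f)
    (hcl : IsClosed (Set.range f))
    (hdisc : DiscreteTopology (Set.range f)) :
    ∀ x : D, x = 0 := by
  classical
  -- Step 0: extract an open set `U` around `0` meeting `range f` only in `0`.
  have h0mem : (0 : (ℕ → ℝ) × (ℕ → UnitAddCircle)) ∈ Set.range f := ⟨0, map_zero f⟩
  have hopen : IsOpen ({⟨0, h0mem⟩} : Set (Set.range f)) := isOpen_discrete _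
  rw [isOpen_induced_iff] at hopen
  obtain ⟨U, hU, hUeq⟩ := hopen
  have hU0 : (0 : (ℕ → ℝ) × (ℕ → UnitAddCircle)) ∈ U := by
    have : (⟨0, h0mem⟩ : Set.range f) ∈ Subtype.val ⁻¹' U := by
      rw [hUeq]; exact rfl
    exact this
  have hUsep : ∀ d : D, f d ∈ U → d = 0 := by
    intro d hd
    have h1 : (⟨f d, ⟨d, rfl⟩⟩ : Set.range f) ∈ Subtype.val ⁻¹' U := hd
    rw [hUeq] at h1
    have h2 : f d = 0 := Subtype.ext_iff.mp (Set.mem_singleton_iff.mp h1)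
    exact hinj (by simpa using h2)
  -- Step 1: every element of `D` is torsion.
  have htor : ∀ x : D, ∃ k : ℕ, 1 ≤ k ∧ k • x = 0 := by
    intro x
    choose y hy using fun n : ℕ => hdiv x (n + 1) (Nat.le_add_left 1 n)
    set a : ℕ → ℝ := (f x).1 with ha
    set c : ℕ → ((ℕ → ℝ) × (ℕ → UnitAddCircle)) := fun n => f (y n) with hc
    have hc1 : ∀ (n : ℕ) (i : ℕ), ((n : ℝ) + 1) * (c n).1 i = a i := by
      intro n i
      have h1 : f ((n + 1) • y n) = f x := congrArg f (hy n)
      rw [map_nsmul] at h1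
      have h2 := congrArg (fun z => z.1 i) h1
      simpa [c, a, nsmul_eq_mul, add_comm] using h2
    -- the sequence `c` lives in a compact set
    set C : Set ((ℕ → ℝ) × (ℕ → UnitAddCircle)) :=
      (Set.univ.pi fun i => Set.Icc (-(|a i|)) (|a i|)) ×ˢ (Set.univ) with hC
    have hCcomp : IsCompact C :=
      (isCompact_univ_pi fun i => isCompact_Icc).prod isCompact_univ
    have hmem : ∀ n, c n ∈ C := by
      intro n
      refine ⟨fun i _ => ?_, trivial⟩
      have hpos : (1 : ℝ) ≤ (n : ℝ) + 1 := by
        have := Nat.cast_nonneg (α := ℝ) n; linarith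
      have hne : ((n : ℝ) + 1) ≠ 0 := by positivity
      have hval : (c n).1 i = a i / ((n : ℝ) + 1) := by
        field_simp
        rw [mul_comm]
        exact hc1 n i
      have habs : |(c n).1 i| ≤ |a i| := by
        rw [hval, abs_div]
        calc |a i| / |(n : ℝ) + 1| ≤ |a i| / 1 := by
              apply div_le_div_of_nonneg_left (abs_nonneg _) one_pos ?_ |>.trans_eq rfl
              rwa [abs_of_pos (by positivity)]
          _ = |a i| := div_one _
      exact abs_le.mp habs
    obtain ⟨z, -, φ, hφ, hlim⟩ := hCcomp.tendsto_subseq hmem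
    have hdiff : Filter.Tendsto (fun n => c (φ (n + 1)) - c (φ n)) Filter.atTop (nhds 0) := by
      have h1 : Filter.Tendsto (fun n => c (φ (n + 1))) Filter.atTop (nhds z) :=
        hlim.comp (Filter.tendsto_add_atTop_nat 1)
      simpa using h1.sub hlim
    obtain ⟨n, hn⟩ := (hdiff.eventually (hU.mem_nhds hU0)).exists
    have heqf : c (φ (n + 1)) - c (φ n) = f (y (φ (n + 1)) - y (φ n)) := by
      simp [c, map_sub]
    rw [heqf] at hn
    have hyeq : y (φ (n + 1)) = y (φ n) := by
      have := hUsep _ hn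
      exact sub_eq_zero.mp this
    set m : ℕ := φ n with hm
    set m' : ℕ := φ (n + 1) with hm'
    have hmm : m < m' := hφ (Nat.lt_succ_self n)
    -- (m'+1) • (y m) = x and (m+1) • (y m) = x
    have e1 : (m' + 1) • y m = x := by rw [← hyeq]; exact hy m'
    have e2 : (m + 1) • y m = x := hy m
    have e3 : ((m' : ℤ) - m) • y m = 0 := by
      have z1 : ((m' + 1 : ℕ) : ℤ) • y m = x := by rw [natCast_zsmul]; exact e1
      have z2 : ((m + 1 : ℕ) : ℤ) • y m = x := by rw [natCast_zsmul]; exact e2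
      have hcast : ((m' + 1 : ℕ) : ℤ) - ((m + 1 : ℕ) : ℤ) = (m' : ℤ) - m := by
        push_cast; ring
      rw [← hcast, sub_zsmul, z1, z2]; abel
    refine ⟨m' - m, by omega, ?_⟩
    have e4 : (m' - m : ℕ) • y m = 0 := by
      have : ((m' - m : ℕ) : ℤ) • y m = 0 := by
        rw [show ((m' - m : ℕ) : ℤ) = (m' : ℤ) - m by omega]
        exact e3
      rwa [natCast_zsmul] at this
    calc (m' - m) • x = (m' - m) • ((m + 1) • y m) := by rw [e2]
      _ = (m + 1) • ((m' - m) • y m) := smul_comm _ _ _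
      _ = 0 := by rw [e4, smul_zero]
  -- Step 2: the real parts of `f` vanish.
  have hre : ∀ d : D, (f d).1 = 0 := by
    intro d
    obtain ⟨k, hk1, hk⟩ := htor d
    funext i
    have h2 : f (k • d) = 0 := by rw [hk, map_zero]
    rw [map_nsmul] at h2
    have h3 := congrArg (fun z => z.1 i) h2
    have h4 : (k : ℝ) * (f d).1 i = 0 := by
      simpa [nsmul_eq_mul] using h3
    have hk0 : (k : ℝ) ≠ 0 := by exact_mod_cast Nat.one_le_iff_ne_zero.mp hk1
    have := (mul_eq_zero.mp h4).resolve_left hk0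
    simpa using this
  -- Step 3: range f is compact, hence finite; so D is finite.
  have hsub : Set.range f ⊆ ({0} : Set (ℕ → ℝ)) ×ˢ (Set.univ : Set (ℕ → UnitAddCircle)) := by
    rintro _ ⟨d, rfl⟩
    exact ⟨hre d, trivial⟩
  have hcomp : IsCompact (Set.range f) :=
    (isCompact_singleton.prod isCompact_univ).of_isClosed_subset hcl hsub
  have : CompactSpace (Set.range f) := isCompact_iff_compactSpace.mp hcomp
  have hfin : Finite (Set.range f) := finite_of_compact_of_discrete
  have hfinD : Finite D :=
    Finite.of_injective (fun d => (⟨f d, ⟨d, rfl⟩⟩ : Set.range f))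
      (fun a b h => hinj (congrArg Subtype.val h))
  -- Step 4: a finite divisible group is trivial.
  intro x
  have hpos : 1 ≤ Nat.card D := Nat.one_le_iff_ne_zero.mpr Nat.card_pos.ne'
  obtain ⟨w, hw⟩ := hdiv x (Nat.card D) hpos
  haveI : Fintype D := Fintype.ofFinite D
  have hzero : (Nat.card D) • w = 0 := by
    rw [Nat.card_eq_fintype_card]
    exact addOrderOf_dvd_iff_nsmul_eq_zero.mp addOrderOf_dvd_card
  rw [← hw, hzero]
end
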